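/- arXiv:2605.03726 — 8 statements merged into one kernel-verified Lean document; each statement's English description precedes it below -/
import Mathlib

section
/- For the discrete-time dynamic unicycle model, no input sequence can achieve exponential decay with state-norm exponent q > 1/2: for all positive reals r, q, λ, μ with 1/2 < q ≤ 1, there exists ε ∈ (0, r) such that for every input sequence u : ℕ → ℝ², the solution x : ℕ → ℝ⁵ of the unicycle dynamics with initial state (0, ε, 0, 0, 0) violates the bound ‖x(t)‖ ≤ ‖x(0)‖^q · λ · e^{−μt} at some time t = τ ∈ ℕ. -/
/-!
Each step moves the lateral coordinate `𝗒` by `h v sin θ`, which is quadratic in the state.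
Under a decay bound `‖x t‖ ≤ ε^q λ e^{-μt}` the total lateral drift is therefore at most a
constant times `ε^{2q}`, which is `o(ε)` because `2q > 1`. So for small `ε` a trajectory starting
at lateral offset `ε` keeps `𝗒 ≥ ε / 2` forever, while the bound forces `‖x t‖ → 0`.
-/

open Real

/-- The discrete-time dynamic unicycle model: `x` is a solution with input `u`. -/
def UnicycleSol (m J k κ h : ℝ) (u : ℕ → ℝ × ℝ)
    (x : ℕ → EuclideanSpace ℝ (Fin 5)) : Prop :=
  ∀ t : ℕ,
    x (t + 1) 0 = x t 0 + h * x t 3 * Real.cos (x t 2) ∧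
    x (t + 1) 1 = x t 1 + h * x t 3 * Real.sin (x t 2) ∧
    x (t + 1) 2 = x t 2 + h * x t 4 ∧
    x (t + 1) 3 = x t 3 + (h / m) * ((u t).1 - k * x t 3) ∧
    x (t + 1) 4 = x t 4 + (h / J) * ((u t).2 - κ * x t 4)

open Filter Topology

theorem EuclideanSpace.abs_apply_le_norm {ι : Type*} [Fintype ι] (x : EuclideanSpace ℝ ι)
    (i : ι) : |x i| ≤ ‖x‖ :=
  Real.norm_eq_abs (x i) ▸ PiLp.norm_apply_le x i

theorem dist_le_of_le_geometric {α : Type*} [PseudoMetricSpace α] {f : ℕ → α} {C r : ℝ}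
    (hr0 : 0 ≤ r) (hr1 : r < 1) (hf : ∀ n, dist (f n) (f (n + 1)) ≤ C * r ^ n) (n : ℕ) :
    dist (f 0) (f n) ≤ C / (1 - r) := by
  have hC : 0 ≤ C := by simpa using dist_nonneg.trans (hf 0)
  calc dist (f 0) (f n) ≤ ∑ i ∈ Finset.range n, C * r ^ i :=
        dist_le_range_sum_of_dist_le n fun _ => hf _
    _ ≤ C / (1 - r) :=
        sum_le_hasSum _ (fun i _ => by positivity) (aux_hasSum_of_le_geometric hr1 hf)

theorem eventually_mul_rpow_le_half {p : ℝ} (hp : 1 < p) (K : ℝ) :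
    ∀ᶠ ε in 𝓝[>] (0 : ℝ), K * ε ^ p ≤ ε / 2 := by
  have hlim : Tendsto (fun ε : ℝ => K * ε ^ (p - 1)) (𝓝[>] 0) (𝓝 0) := by
    have := (continuousAt_rpow_const 0 (p - 1) (Or.inr (by linarith))).tendsto.const_mul K
    rw [zero_rpow (by linarith), mul_zero] at this
    exact this.mono_left nhdsWithin_le_nhds
  filter_upwards [hlim.eventually (gt_mem_nhds one_half_pos), self_mem_nhdsWithin]
    with ε hsmall (hε : 0 < ε)
  rw [rpow_sub_one hε.ne'] at hsmall
  calc K * ε ^ p = K * (ε ^ p / ε) * ε := by field_simp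
    _ ≤ 1 / 2 * ε := by gcongr
    _ = ε / 2 := by ring

namespace UnicycleSol

variable {m J k κ h : ℝ} {u : ℕ → ℝ × ℝ} {x : ℕ → EuclideanSpace ℝ (Fin 5)}

theorem dist_apply_one_succ_le (hx : UnicycleSol m J k κ h u x) (t : ℕ) :
    dist (x t 1) (x (t + 1) 1) ≤ |h| * ‖x t‖ ^ 2 := by
  rw [dist_comm, Real.dist_eq, (hx t).2.1, add_sub_cancel_left, abs_mul, abs_mul, sq, mul_assoc]
  gcongr
  · exact (x t).abs_apply_le_norm 3
  · exact abs_sin_le_abs.trans ((x t).abs_apply_le_norm 2)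

theorem dist_apply_one_le (hx : UnicycleSol m J k κ h u x) {C r : ℝ} (hr0 : 0 ≤ r)
    (hr1 : r < 1) (hC : ∀ t, ‖x t‖ ^ 2 ≤ C * r ^ t) (t : ℕ) :
    dist (x 0 1) (x t 1) ≤ |h| * C / (1 - r) :=
  dist_le_of_le_geometric (f := fun t => x t 1) hr0 hr1
    (fun n => (hx.dist_apply_one_succ_le n).trans <| by
      rw [mul_assoc]; exact mul_le_mul_of_nonneg_left (hC n) (abs_nonneg h)) t

end UnicycleSol

theorem unicycle_no_exponential_stability_general
    (m J k κ h : ℝ)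
    (r q lam mu : ℝ) (hr : 0 < r) (hq : 1 / 2 < q)
    (hmu : 0 < mu) :
    ∃ ε ∈ Set.Ioo (0 : ℝ) r,
      ∀ (u : ℕ → ℝ × ℝ) (x : ℕ → EuclideanSpace ℝ (Fin 5)),
        UnicycleSol m J k κ h u x →
        x 0 0 = 0 → x 0 1 = ε → x 0 2 = 0 → x 0 3 = 0 → x 0 4 = 0 →
        ∃ τ : ℕ, ¬ (‖x τ‖ ≤ ‖x 0‖ ^ q * lam * Real.exp (-mu * τ)) := by
  set b := exp (-mu)
  have hb0 : 0 ≤ b := (exp_pos _).le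
  have hb1 : b < 1 := exp_lt_one_iff.mpr (neg_neg_iff_pos.mpr hmu)
  obtain ⟨ε, ⟨hε0, hεr⟩, hεsmall⟩ : ∃ ε ∈ Set.Ioo 0 r,
      |h| * lam ^ 2 / (1 - b ^ 2) * ε ^ (2 * q) ≤ ε / 2 :=
    (Eventually.and (Ioo_mem_nhdsGT hr) (eventually_mul_rpow_le_half (by linarith) _)).exists
  refine ⟨ε, ⟨hε0, hεr⟩, fun u x hx h0 h1 h2 h3 h4 => ?_⟩
  by_contra! hdecay
  have hx0 : ‖x 0‖ = ε := by
    simp [EuclideanSpace.norm_eq, Fin.sum_univ_five, h0, h1, h2, h3, h4, sqrt_sq hε0.le]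
  simp only [hx0, mul_comm (-mu), exp_nat_mul] at hdecay
  have hsq (t : ℕ) : ‖x t‖ ^ 2 ≤ lam ^ 2 * ε ^ (2 * q) * (b ^ 2) ^ t :=
    calc ‖x t‖ ^ 2 ≤ (ε ^ q * lam * b ^ t) ^ 2 :=
          pow_le_pow_left₀ (norm_nonneg _) (hdecay t) 2
      _ = lam ^ 2 * ε ^ (2 * q) * (b ^ 2) ^ t := by
        rw [mul_comm 2 q, rpow_mul hε0.le, rpow_two]; ring
  have hlow (t : ℕ) : ε / 2 ≤ ‖x t‖ := by
    have hdrift := ((hx.dist_apply_one_le (by positivity) (pow_lt_one₀ hb0 hb1 two_ne_zero)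
      hsq t).trans_eq (by ring)).trans hεsmall
    rw [h1, Real.dist_eq, abs_le] at hdrift
    linarith [le_abs_self (x t 1), (x t).abs_apply_le_norm 1]
  have hlim : Tendsto (fun t : ℕ => ε ^ q * lam * b ^ t) atTop (𝓝 0) := by
    simpa using (tendsto_pow_atTop_nhds_zero_of_lt_one hb0 hb1).const_mul (ε ^ q * lam)
  obtain ⟨t, ht⟩ := (hlim.eventually (gt_mem_nhds (half_pos hε0))).exists
  exact (hlow t).not_gt ((hdecay t).trans_lt ht)

/-- no input sequence achieves exponential decay with exponent `q > 1/2`. -/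
theorem unicycle_no_exponential_stability
    (m J k κ h : ℝ) (hm : 0 < m) (hJ : 0 < J) (hk : 0 < k) (hκ : 0 < κ) (hh : 0 < h)
    (r q lam mu : ℝ) (hr : 0 < r) (hq : 1 / 2 < q) (hq1 : q ≤ 1)
    (hlam : 0 < lam) (hmu : 0 < mu) :
    ∃ ε ∈ Set.Ioo (0 : ℝ) r,
      ∀ (u : ℕ → ℝ × ℝ) (x : ℕ → EuclideanSpace ℝ (Fin 5)),
        UnicycleSol m J k κ h u x →
        x 0 0 = 0 → x 0 1 = ε → x 0 2 = 0 → x 0 3 = 0 → x 0 4 = 0 →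
        ∃ τ : ℕ, ¬ (‖x τ‖ ≤ ‖x 0‖ ^ q * lam * Real.exp (-mu * τ)) :=
  unicycle_no_exponential_stability_general m J k κ h r q lam mu hr hq hmu
end

section
/- Suppose along a trajectory x : ℕ → 𝕏 there are times 0 = τ₀ < τ₁ < ⋯ with τ_{k+1} − τ_k ≤ N such that V(x(τ_{k+1})) ≤ (1−α)·V(x(τ_k)) for all k, and V(x(t)) ≤ φ(V(x(τ_k))) for all t ∈ (τ_k : τ_{k+1}]. Then for every k and every t ∈ (τ_k : τ_{k+1}], V(x(t)) ≤ φ(V(x(0))·e^{α − α·t/N}), where V is nonnegative and φ ∈ 𝒦_∞. -/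
/-!
Along the visit times `V` decays geometrically, `V (x (τ k)) ≤ (1 - α) ^ k * V (x 0)`, and since
the gaps are at most `N` we have `τ (k + 1) ≤ (k + 1) * N`. For `t ∈ (τ k, τ (k + 1)]` this gives
`(1 - α) ^ k ≤ exp (-α k) ≤ exp (α - α t / N)`, and the bound `V (x t) ≤ φ (V (x (τ k)))` together
with monotonicity of `φ` turns the decay at `τ k` into the envelope at `t`.
-/

open Real

lemma le_add_mul_of_succ_le_add {τ : ℕ → ℕ} {N : ℕ} (h : ∀ k, τ (k + 1) ≤ τ k + N) (k : ℕ) :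
    τ k ≤ τ 0 + k * N := by
  induction k with
  | zero => simp
  | succ k ih => rw [Nat.succ_mul]; linarith [h k]

lemma one_sub_pow_le_exp_neg_mul {α : ℝ} (hα : α ≤ 1) (k : ℕ) :
    (1 - α) ^ k ≤ exp (-(k * α)) := by
  rw [← mul_neg, exp_nat_mul]
  exact pow_le_pow_left₀ (sub_nonneg.2 hα) (one_sub_le_exp_neg α) k

lemma one_sub_pow_le_exp_sub_mul_div {α N t : ℝ} (hα₀ : 0 ≤ α) (hα₁ : α ≤ 1) (hN : 0 < N)
    {k : ℕ} (ht : t ≤ (k + 1) * N) :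
    (1 - α) ^ k ≤ exp (α - α * t / N) := by
  refine (one_sub_pow_le_exp_neg_mul hα₁ k).trans (exp_le_exp.2 ?_)
  have : α * t / N ≤ α * (k + 1) := by
    rw [div_le_iff₀ hN, mul_assoc]
    exact mul_le_mul_of_nonneg_left ht hα₀
  linarith

theorem nonmonotonic_lyapunov_envelope_general
    {X : Type*} (V : X → ℝ) (hVnn : ∀ x, 0 ≤ V x)
    (α : ℝ) (hα : α ∈ Set.Ioo (0 : ℝ) 1) (N : ℕ) (hN : 1 ≤ N)
    (φ : ℝ → ℝ)
    (hφm : StrictMonoOn φ (Set.Ici 0))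
    (x : ℕ → X) (τ : ℕ → ℕ)
    (hτ0 : τ 0 = 0)
    (hτgap : ∀ k, τ (k + 1) ≤ τ k + N)
    (hdec : ∀ k, V (x (τ (k + 1))) ≤ (1 - α) * V (x (τ k)))
    (hbound : ∀ k, ∀ t : ℕ, τ k < t → t ≤ τ (k + 1) → V (x t) ≤ φ (V (x (τ k)))) :
    ∀ k, ∀ t : ℕ, τ k < t → t ≤ τ (k + 1) →
      V (x t) ≤ φ (V (x 0) * Real.exp (α - α * t / N)) := by
  intro k t hkt htk
  have hgeom : V (x (τ k)) ≤ (1 - α) ^ k * V (x 0) := by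
    simpa [hτ0] using le_geom (u := fun k ↦ V (x (τ k))) (by linarith [hα.2]) k fun k _ ↦ hdec k
  have ht : (t : ℝ) ≤ (k + 1) * N := by
    exact_mod_cast htk.trans (by simpa [hτ0] using le_add_mul_of_succ_le_add hτgap (k + 1))
  have hdecay : V (x (τ k)) ≤ V (x 0) * exp (α - α * t / N) := by
    rw [mul_comm]
    exact hgeom.trans <| mul_le_mul_of_nonneg_right
      (one_sub_pow_le_exp_sub_mul_div hα.1.le hα.2.le (by exact_mod_cast hN) ht) (hVnn _)
  exact (hbound k t hkt htk).trans <|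
    hφm.monotoneOn (hVnn _) (mul_nonneg (hVnn _) (exp_pos _).le) hdecay

/-- non-monotonic Lyapunov decay along visit times gives an
exponential envelope. -/
theorem nonmonotonic_lyapunov_envelope
    {X : Type*} (V : X → ℝ) (hVnn : ∀ x, 0 ≤ V x)
    (α : ℝ) (hα : α ∈ Set.Ioo (0 : ℝ) 1) (N : ℕ) (hN : 1 ≤ N)
    (φ : ℝ → ℝ) (hφc : ContinuousOn φ (Set.Ici 0))
    (hφm : StrictMonoOn φ (Set.Ici 0)) (hφ0 : φ 0 = 0)
    (x : ℕ → X) (τ : ℕ → ℕ)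
    (hτ0 : τ 0 = 0)
    (hτmono : ∀ k, τ k < τ (k + 1))
    (hτgap : ∀ k, τ (k + 1) ≤ τ k + N)
    (hdec : ∀ k, V (x (τ (k + 1))) ≤ (1 - α) * V (x (τ k)))
    (hbound : ∀ k, ∀ t : ℕ, τ k < t → t ≤ τ (k + 1) → V (x t) ≤ φ (V (x (τ k)))) :
    ∀ k, ∀ t : ℕ, τ k < t → t ≤ τ (k + 1) →
      V (x t) ≤ φ (V (x 0) * Real.exp (α - α * t / N)) :=
  nonmonotonic_lyapunov_envelope_general V hVnn α hα N hN φ hφm x τ hτ0 hτgap hdec hbound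
end

section
/- The function V : ℝ⁵ → ℝ defined by V(x) = (𝗑⁴ + |𝗒|^{φ(|𝗒|)} + θ⁴ + v⁴ + ω⁴)^{1/4} satisfies ξ₁·‖x‖ ≤ V(x) ≤ ξ₂·max{‖x‖^{1/2}, ‖x‖} for all x ∈ ℝ⁵, where ξ₁ = 1/20 and ξ₂ = 2, and ‖·‖ is the Euclidean norm on ℝ⁵. -/
set_option maxHeartbeats 2000000 in
/-- the Condition-1 Lyapunov function is comparable to the norm. -/
theorem condition1_V_norm_bounds
    (φ : ℝ → ℝ) (hφmono : ∀ s t : ℝ, 0 ≤ s → s ≤ t → φ s ≤ φ t)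
    (hφrange : ∀ s : ℝ, 0 ≤ s → φ s ∈ Set.Icc (2 : ℝ) 4)
    (hφ2 : ∀ s : ℝ, 0 ≤ s → s ≤ 1 → φ s = 2)
    (hφ4 : ∀ s : ℝ, 2 ≤ s → φ s = 4) :
    ∀ x : EuclideanSpace ℝ (Fin 5),
      (1 / 20) * ‖x‖ ≤
        ((x 0) ^ 4 + |x 1| ^ φ |x 1| + (x 2) ^ 4 + (x 3) ^ 4 + (x 4) ^ 4) ^ (1/4 : ℝ) ∧
      ((x 0) ^ 4 + |x 1| ^ φ |x 1| + (x 2) ^ 4 + (x 3) ^ 4 + (x 4) ^ 4) ^ (1/4 : ℝ) ≤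
        2 * max (‖x‖ ^ (1/2 : ℝ)) ‖x‖ := by
  intro x
  obtain ⟨m, hm⟩ : ∃ m : ℝ, m = ‖x‖ := ⟨_, rfl⟩
  obtain ⟨B, hB⟩ : ∃ B : ℝ, B = |x 1| := ⟨_, rfl⟩
  obtain ⟨S, hSdef⟩ : ∃ S : ℝ,
      S = (x 0) ^ 4 + B ^ φ B + (x 2) ^ 4 + (x 3) ^ 4 + (x 4) ^ 4 := ⟨_, rfl⟩
  rw [← hB, ← hSdef, ← hm]
  have hm0 : 0 ≤ m := hm ▸ norm_nonneg x
  have hb0 : 0 ≤ B := hB ▸ abs_nonneg _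
  have hBφ0 : 0 ≤ B ^ φ B := Real.rpow_nonneg hb0 _
  have h04 : (0:ℝ) ≤ (x 0)^4 := by positivity
  have h24 : (0:ℝ) ≤ (x 2)^4 := by positivity
  have h34 : (0:ℝ) ≤ (x 3)^4 := by positivity
  have h44 : (0:ℝ) ≤ (x 4)^4 := by positivity
  have hS0 : 0 ≤ S := by rw [hSdef]; positivity
  obtain ⟨hφlo, hφhi⟩ := hφrange B hb0
  have hm2 : m^2 = (x 0)^2 + (x 1)^2 + (x 2)^2 + (x 3)^2 + (x 4)^2 := by
    rw [hm, EuclideanSpace.norm_eq, Real.sq_sqrt (by positivity)]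
    simp [Real.norm_eq_abs, sq_abs, Fin.sum_univ_five]
  have habs_le : ∀ a : ℝ, a^2 ≤ m^2 → |a| ≤ m := fun a h => by
    nlinarith [abs_nonneg a, sq_abs a]
  have hsq : ∀ a : Fin 5, True := fun _ => trivial
  have hc0 : |x 0| ≤ m := habs_le _ (by rw [hm2]; nlinarith [sq_nonneg (x 1), sq_nonneg (x 2), sq_nonneg (x 3), sq_nonneg (x 4)])
  have hc1 : |x 1| ≤ m := habs_le _ (by rw [hm2]; nlinarith [sq_nonneg (x 0), sq_nonneg (x 2), sq_nonneg (x 3), sq_nonneg (x 4)])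
  have hc2 : |x 2| ≤ m := habs_le _ (by rw [hm2]; nlinarith [sq_nonneg (x 0), sq_nonneg (x 1), sq_nonneg (x 3), sq_nonneg (x 4)])
  have hc3 : |x 3| ≤ m := habs_le _ (by rw [hm2]; nlinarith [sq_nonneg (x 0), sq_nonneg (x 1), sq_nonneg (x 2), sq_nonneg (x 4)])
  have hc4 : |x 4| ≤ m := habs_le _ (by rw [hm2]; nlinarith [sq_nonneg (x 0), sq_nonneg (x 1), sq_nonneg (x 2), sq_nonneg (x 3)])
  have habs4 : ∀ y : ℝ, |y|^4 = y^4 := fun y => by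
    rw [← abs_pow, abs_of_nonneg (by positivity)]
  -- maximum of the quartic coordinates
  obtain ⟨A, hA⟩ : ∃ A : ℝ, A = max (max (max |x 0| |x 2|) |x 3|) |x 4| := ⟨_, rfl⟩
  have hA0 : 0 ≤ A := hA ▸ le_trans (abs_nonneg (x 4)) (le_max_right _ _)
  have hA4 : A^4 ≤ (x 0)^4 + (x 2)^4 + (x 3)^4 + (x 4)^4 := by
    rcases max_choice (max (max |x 0| |x 2|) |x 3|) |x 4| with h3 | h3
    · rw [hA, h3]
      rcases max_choice (max |x 0| |x 2|) |x 3| with h2 | h2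
      · rw [h2]
        rcases max_choice |x 0| |x 2| with h1 | h1 <;> rw [h1, habs4] <;> linarith
      · rw [h2, habs4]; linarith
    · rw [hA, h3, habs4]; linarith
  obtain ⟨M, hM⟩ : ∃ M : ℝ, M = max A B := ⟨_, rfl⟩
  have hM0 : 0 ≤ M := hM ▸ le_trans hA0 (le_max_left _ _)
  have sq_of_abs : ∀ a : ℝ, |a| ≤ M → a^2 ≤ M^2 := fun a ha => by
    have h := pow_le_pow_left₀ (abs_nonneg a) ha 2
    rwa [sq_abs] at h
  have e0 : (x 0)^2 ≤ M^2 := sq_of_abs _ (by rw [hM, hA]; simp [le_max_iff])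
  have e2 : (x 2)^2 ≤ M^2 := sq_of_abs _ (by rw [hM, hA]; simp [le_max_iff])
  have e3 : (x 3)^2 ≤ M^2 := sq_of_abs _ (by rw [hM, hA]; simp [le_max_iff])
  have e4 : (x 4)^2 ≤ M^2 := sq_of_abs _ (by rw [hM, hA]; simp [le_max_iff])
  have e1 : (x 1)^2 ≤ M^2 := sq_of_abs _ (by rw [hM, ← hB]; exact le_max_right _ _)
  have hmM : m ≤ 3 * M := by
    have hsq9 : m^2 ≤ (3*M)^2 := by
      rw [hm2]; nlinarith [sq_nonneg M]
    calc m = Real.sqrt (m^2) := (Real.sqrt_sq hm0).symm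
      _ ≤ Real.sqrt ((3*M)^2) := Real.sqrt_le_sqrt hsq9
      _ = 3*M := Real.sqrt_sq (by linarith)
  have hAS : A^4 ≤ S := by rw [hSdef]; linarith
  have hBS : B ^ φ B ≤ S := by rw [hSdef]; linarith
  have key : (3*M/20)^4 ≤ S := by
    rcases le_total B A with hBA | hAB
    · have hMA : M = A := hM ▸ max_eq_left hBA
      rw [hMA]
      nlinarith [pow_nonneg hA0 4, hAS]
    · have hMB : M = B := hM ▸ max_eq_right hAB
      rw [hMB]
      rcases le_total B 1 with hB1 | hB1
      · have hφB : φ B = 2 := hφ2 B hb0 hB1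
        have hB2 : B ^ φ B = B^2 := by rw [hφB]; exact Real.rpow_two B
        have h1 : B^4 ≤ B^2 := by
          have hb2 : B^2 ≤ 1 := by nlinarith
          nlinarith [mul_nonneg (sq_nonneg B) (sub_nonneg.mpr hb2)]
        have h2 : (3*B/20)^4 ≤ B^4 := by nlinarith [pow_nonneg hb0 4]
        linarith
      · rcases le_total B 2 with hB2 | hB2
        · have h2φ : B^(2:ℝ) ≤ B^(φ B) := Real.rpow_le_rpow_of_exponent_le hB1 hφlo
          have hr2 : B^(2:ℝ) = B^2 := Real.rpow_two B
          rw [hr2] at h2φ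
          have h1 : B^2 ≤ 4 := by nlinarith
          have h2 : B^4 ≤ 16 := by nlinarith [h1, sq_nonneg B]
          have h3 : (1:ℝ) ≤ B^2 := by nlinarith
          have h4 : (3*B/20)^4 ≤ 1 := by nlinarith [h2, pow_nonneg hb0 4]
          linarith
        · have hφB : φ B = 4 := hφ4 B hB2
          have hB4 : B ^ φ B = B^4 := by
            rw [hφB, show (4:ℝ) = ((4:ℕ):ℝ) by norm_num, Real.rpow_natCast]
          nlinarith [hBS, hB4]
  constructor
  · have key2 : (m/20)^4 ≤ S := by
      have h1 : m/20 ≤ 3*M/20 := by linarith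
      have h2 : (m/20)^4 ≤ (3*M/20)^4 := pow_le_pow_left₀ (by positivity) h1 4
      linarith
    calc (1/20) * m = ((m/20)^4) ^ (1/4:ℝ) := by
          rw [show ((m/20)^4 : ℝ) = (m/20) ^ ((4:ℕ):ℝ) from (Real.rpow_natCast _ 4).symm,
            ← Real.rpow_mul (by positivity)]
          norm_num; ring
      _ ≤ S ^ (1/4:ℝ) := Real.rpow_le_rpow (by positivity) key2 (by norm_num)
  · set K := max (m ^ (1/2:ℝ)) m with hK
    have hK0 : 0 ≤ K := le_trans hm0 (le_max_right _ _)
    have hmK : m ≤ K := le_max_right _ _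
    have hm4K : m^4 ≤ K^4 := pow_le_pow_left₀ hm0 hmK 4
    have hm2K : m^2 ≤ K^4 := by
      have h1 : (m^(1/2:ℝ))^4 = m^2 := by
        rw [show ((m^(1/2:ℝ))^4 : ℝ) = (m^(1/2:ℝ)) ^ ((4:ℕ):ℝ) from (Real.rpow_natCast _ 4).symm,
          ← Real.rpow_mul hm0]
        norm_num [Real.rpow_two]
      have h2 : (m^(1/2:ℝ))^4 ≤ K^4 := pow_le_pow_left₀ (Real.rpow_nonneg hm0 _) (le_max_left _ _) 4
      linarith
    have hcK4 : ∀ a : ℝ, |a| ≤ m → a^4 ≤ K^4 := fun a ha => by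
      have := pow_le_pow_left₀ (abs_nonneg a) ha 4
      rw [habs4] at this
      have := pow_le_pow_left₀ hm0 hmK 4
      linarith
    have hK0' := hcK4 _ hc0
    have hK2' := hcK4 _ hc2
    have hK3' := hcK4 _ hc3
    have hK4' := hcK4 _ hc4
    have hBK : B ^ φ B ≤ K^4 := by
      rcases le_total B 1 with hB1 | hB1
      · have hφB : φ B = 2 := hφ2 B hb0 hB1
        have hB2 : B ^ φ B = B^2 := by rw [hφB]; exact Real.rpow_two B
        have : B^2 ≤ m^2 := by nlinarith [hc1, hb0]
        linarith
      · have h4φ : B^(φ B) ≤ B^(4:ℝ) := Real.rpow_le_rpow_of_exponent_le hB1 hφhi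
        have hr4 : B^(4:ℝ) = B^4 := by
          rw [show (4:ℝ) = ((4:ℕ):ℝ) by norm_num, Real.rpow_natCast]
        rw [hr4] at h4φ
        have hBm : B ≤ m := hB ▸ hc1
        have : B^4 ≤ m^4 := pow_le_pow_left₀ hb0 hBm 4
        linarith
    have hS16 : S ≤ (2*K)^4 := by
      have hK4 : 0 ≤ K^4 := by positivity
      rw [hSdef]; nlinarith [hK0', hK2', hK3', hK4', hBK]
    calc S ^ (1/4:ℝ) ≤ ((2*K)^4) ^ (1/4:ℝ) := Real.rpow_le_rpow hS0 hS16 (by norm_num)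
      _ = 2*K := by
          rw [show ((2*K)^4 : ℝ) = (2*K) ^ ((4:ℕ):ℝ) from (Real.rpow_natCast _ 4).symm,
            ← Real.rpow_mul (by positivity)]
          norm_num
end

section
/- Let φ : [0,∞) → [2,4] be non-decreasing with φ(s) = 2 for s ≤ 1 and φ(s) = 4 for s ≥ 2. Let y₀, θ₀, v₀ ∈ ℝ, h > 0, and y₁ := y₀ + h·v₀·sin(θ₀). Then |y₁|^{φ(|y₁|)} ≤ 32·|y₀|^{φ(|y₀|)} + 8·h⁴·v₀⁴ + θ₀⁴. -/
/-!
Split according to whether `|y₁| ≤ 1`. If so, `|y₁| ^ φ |y₁| = y₁ ^ 2 ≤ 2 y₀ ^ 2 + 2 (h v₀ sin θ₀) ^ 2`,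
and `2 (h v₀ sin θ₀) ^ 2 ≤ 2 (h v₀) ^ 2 θ₀ ^ 2 ≤ h ^ 4 v₀ ^ 4 + θ₀ ^ 4` by `|sin θ₀| ≤ |θ₀|` and AM-GM.
Otherwise `|y₁| ^ φ |y₁| ≤ y₁ ^ 4 ≤ 8 y₀ ^ 4 + 8 (h v₀) ^ 4` by `|sin θ₀| ≤ 1`. In both cases `y₀ ^ 2`
and `y₀ ^ 4 / 4` are dominated by `|y₀| ^ φ |y₀|`: for `y₀ ^ 4 / 4` use `|y₀| ^ 2 ≥ |y₀| ^ 4 / 4` when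
`|y₀| ≤ 2` and `φ |y₀| = 4` when `|y₀| ≥ 2`.
-/

open Real

section InterpolatedPower

variable {φ : ℝ → ℝ} {a x y : ℝ}

lemma sq_le_rpow_self_of_interpolating (hφrange : ∀ s : ℝ, 0 ≤ s → φ s ∈ Set.Icc (2 : ℝ) 4)
    (hφ2 : ∀ s : ℝ, 0 ≤ s → s ≤ 1 → φ s = 2) (ha : 0 ≤ a) : a ^ 2 ≤ a ^ φ a := by
  rcases le_or_gt a 1 with ha1 | ha1
  · rw [hφ2 a ha ha1, rpow_two]
  · rw [← rpow_two]
    exact rpow_le_rpow_of_exponent_le ha1.le (hφrange a ha).1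

lemma pow_four_le_four_mul_rpow_self_of_interpolating
    (hφrange : ∀ s : ℝ, 0 ≤ s → φ s ∈ Set.Icc (2 : ℝ) 4)
    (hφ2 : ∀ s : ℝ, 0 ≤ s → s ≤ 1 → φ s = 2) (hφ4 : ∀ s : ℝ, 2 ≤ s → φ s = 4) (ha : 0 ≤ a) :
    a ^ 4 ≤ 4 * a ^ φ a := by
  rcases le_or_gt a 2 with ha2 | ha2
  · have hsq : a ^ 2 ≤ 4 := by nlinarith
    calc a ^ 4 = a ^ 2 * a ^ 2 := by ring
      _ ≤ 4 * a ^ 2 := by gcongr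
      _ ≤ 4 * a ^ φ a := by gcongr; exact sq_le_rpow_self_of_interpolating hφrange hφ2 ha
  · rw [hφ4 a ha2.le, rpow_ofNat]
    nlinarith [pow_nonneg ha 4]

lemma abs_add_rpow_self_le_of_le_one (hφrange : ∀ s : ℝ, 0 ≤ s → φ s ∈ Set.Icc (2 : ℝ) 4)
    (hφ2 : ∀ s : ℝ, 0 ≤ s → s ≤ 1 → φ s = 2) (hxy : |x + y| ≤ 1) :
    |x + y| ^ φ |x + y| ≤ 2 * |x| ^ φ |x| + 2 * y ^ 2 := by
  calc |x + y| ^ φ |x + y| = (x + y) ^ 2 := by rw [hφ2 _ (abs_nonneg _) hxy, rpow_two, sq_abs]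
    _ ≤ 2 * (x ^ 2 + y ^ 2) := add_sq_le
    _ = 2 * |x| ^ 2 + 2 * y ^ 2 := by rw [sq_abs]; ring
    _ ≤ 2 * |x| ^ φ |x| + 2 * y ^ 2 := by
      gcongr; exact sq_le_rpow_self_of_interpolating hφrange hφ2 (abs_nonneg x)

lemma abs_add_rpow_self_le_of_one_le (hφrange : ∀ s : ℝ, 0 ≤ s → φ s ∈ Set.Icc (2 : ℝ) 4)
    (hφ2 : ∀ s : ℝ, 0 ≤ s → s ≤ 1 → φ s = 2) (hφ4 : ∀ s : ℝ, 2 ≤ s → φ s = 4)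
    (hxy : 1 ≤ |x + y|) :
    |x + y| ^ φ |x + y| ≤ 32 * |x| ^ φ |x| + 8 * y ^ 4 := by
  have heven : Even 4 := by decide
  calc |x + y| ^ φ |x + y| ≤ |x + y| ^ (4 : ℝ) :=
        rpow_le_rpow_of_exponent_le hxy (hφrange _ (abs_nonneg _)).2
    _ = (x + y) ^ 4 := by rw [rpow_ofNat, heven.pow_abs]
    _ ≤ 2 ^ (4 - 1) * (x ^ 4 + y ^ 4) := heven.add_pow_le
    _ = 8 * |x| ^ 4 + 8 * y ^ 4 := by rw [heven.pow_abs]; ring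
    _ ≤ 32 * |x| ^ φ |x| + 8 * y ^ 4 := by
      linarith [pow_four_le_four_mul_rpow_self_of_interpolating hφrange hφ2 hφ4 (abs_nonneg x)]

end InterpolatedPower

lemma two_mul_sq_mul_sin_le (u θ : ℝ) : 2 * (u * sin θ) ^ 2 ≤ u ^ 4 + θ ^ 4 :=
  calc 2 * (u * sin θ) ^ 2 ≤ 2 * (u ^ 2 * θ ^ 2) := by
        rw [mul_pow]; gcongr 2 * (_ * ?_); exact sin_sq_le_sq
    _ ≤ u ^ 4 + θ ^ 4 := by nlinarith [sq_nonneg (u ^ 2 - θ ^ 2)]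

lemma pow_four_mul_sin_le (u θ : ℝ) : (u * sin θ) ^ 4 ≤ u ^ 4 := by
  have hsin : sin θ ^ 4 ≤ 1 := by
    rw [← (by decide : Even 4).pow_abs]
    exact pow_le_one₀ (abs_nonneg _) (abs_sin_le_one θ)
  rw [mul_pow]
  exact mul_le_of_le_one_right (by positivity) hsin

theorem one_step_interpolated_power_bound_general
    (φ : ℝ → ℝ)
    (hφrange : ∀ s : ℝ, 0 ≤ s → φ s ∈ Set.Icc (2 : ℝ) 4)
    (hφ2 : ∀ s : ℝ, 0 ≤ s → s ≤ 1 → φ s = 2)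
    (hφ4 : ∀ s : ℝ, 2 ≤ s → φ s = 4)
    (y₀ θ₀ v₀ h : ℝ)
    (y₁ : ℝ) (hy₁ : y₁ = y₀ + h * v₀ * Real.sin θ₀) :
    |y₁| ^ φ |y₁| ≤ 32 * |y₀| ^ φ |y₀| + 8 * h ^ 4 * v₀ ^ 4 + θ₀ ^ 4 := by
  have hu4 : (h * v₀) ^ 4 = h ^ 4 * v₀ ^ 4 := mul_pow h v₀ 4
  have hu4_nonneg : 0 ≤ h ^ 4 * v₀ ^ 4 := by positivity
  have hθ4_nonneg : 0 ≤ θ₀ ^ 4 := by positivity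
  have hφy₀ : 0 ≤ |y₀| ^ φ |y₀| := rpow_nonneg (abs_nonneg y₀) _
  subst hy₁
  rcases le_total |y₀ + h * v₀ * sin θ₀| 1 with hsmall | hlarge
  · linarith [abs_add_rpow_self_le_of_le_one hφrange hφ2 hsmall,
      two_mul_sq_mul_sin_le (h * v₀) θ₀]
  · linarith [abs_add_rpow_self_le_of_one_le hφrange hφ2 hφ4 hlarge,
      pow_four_mul_sin_le (h * v₀) θ₀]

/-- bound on `|y₁|^(φ(|y₁|))` after one step. -/
theorem one_step_interpolated_power_bound
    (φ : ℝ → ℝ) (hφmono : ∀ s t : ℝ, 0 ≤ s → s ≤ t → φ s ≤ φ t)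
    (hφrange : ∀ s : ℝ, 0 ≤ s → φ s ∈ Set.Icc (2 : ℝ) 4)
    (hφ2 : ∀ s : ℝ, 0 ≤ s → s ≤ 1 → φ s = 2)
    (hφ4 : ∀ s : ℝ, 2 ≤ s → φ s = 4)
    (y₀ θ₀ v₀ h : ℝ) (hh : 0 < h)
    (y₁ : ℝ) (hy₁ : y₁ = y₀ + h * v₀ * Real.sin θ₀) :
    |y₁| ^ φ |y₁| ≤ 32 * |y₀| ^ φ |y₀| + 8 * h ^ 4 * v₀ ^ 4 + θ₀ ^ 4 :=
  one_step_interpolated_power_bound_general φ hφrange hφ2 hφ4 y₀ θ₀ v₀ h y₁ hy₁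
end

section
/- Let y₁ ∈ ℝ and define θ̄ = sgn(y₁)·arctan(|y₁|^{1/2}) and d = (1/2)·|y₁|^{1/2}·(1+|y₁|)^{1/2} if |y₁| ≤ 1, and θ̄ = sgn(y₁)·π/4, d = |y₁|/√2 if |y₁| > 1. Further set x̄ := d·cos(−θ̄) and ȳ := y₁ + d·sin(−θ̄). Then ȳ = y₁/2 and x̄² + ȳ² = d². -/
/-!
In both regimes `d * sin θ̄ = y₁ / 2`: for `|y₁| ≤ 1` because
`sin (arctan s) = s / √(1 + s²)` with `s = √|y₁|` cancels the factor `√(1 + |y₁|)` in `d`,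
and for `|y₁| > 1` because `sin (π / 4) = √2 / 2`. Hence `ȳ = y₁ - d sin θ̄ = y₁ / 2`, and
`x̄² + ȳ² = d² cos² θ̄ + d² sin² θ̄ = d²`.
-/

open Real

namespace Real

theorem sign_mul_abs (r : ℝ) : sign r * |r| = r := by
  rcases lt_trichotomy r 0 with hr | rfl | hr
  · rw [sign_of_neg hr, abs_of_neg hr, neg_one_mul, neg_neg]
  · rw [abs_zero, mul_zero]
  · rw [sign_of_pos hr, abs_of_pos hr, one_mul]

theorem sin_sign_mul (r x : ℝ) : sin (sign r * x) = sign r * sin x := by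
  rcases sign_apply_eq r with h | h | h <;> simp [h]

theorem sqrt_mul_sqrt_one_add_mul_sin_arctan_sqrt {t : ℝ} (ht : 0 ≤ t) :
    √t * √(1 + t) * sin (arctan √t) = t := by
  have h1t : √(1 + t) ≠ 0 := by positivity
  rw [sin_arctan, sq_sqrt ht]
  field_simp
  exact sq_sqrt ht

theorem div_sqrt_two_mul_sin_pi_div_four (t : ℝ) : t / √2 * sin (π / 4) = t / 2 := by
  have h2 : √2 ≠ 0 := by positivity
  rw [sin_pi_div_four]
  field_simp

theorem mul_cos_sq_add_mul_sin_sq (d θ : ℝ) : (d * cos θ) ^ 2 + (d * sin θ) ^ 2 = d ^ 2 := by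
  rw [mul_pow, mul_pow, ← mul_add, cos_sq_add_sin_sq, mul_one]

end Real

/-- the midpoint construction halves the lateral offset and
places the point at distance `d` from the origin. -/
theorem midpoint_construction
    (y₁ θb d xb yb : ℝ)
    (hθb : θb = if |y₁| ≤ 1 then Real.sign y₁ * Real.arctan (Real.sqrt |y₁|)
      else Real.sign y₁ * (π / 4))
    (hd : d = if |y₁| ≤ 1 then (1/2) * Real.sqrt |y₁| * Real.sqrt (1 + |y₁|)
      else |y₁| / Real.sqrt 2)
    (hxb : xb = d * Real.cos (-θb))
    (hyb : yb = y₁ + d * Real.sin (-θb)) :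
    yb = y₁ / 2 ∧ xb ^ 2 + yb ^ 2 = d ^ 2 := by
  have half_offset : d * sin θb = y₁ / 2 := by
    split_ifs at hθb hd <;> subst hθb hd <;> rw [sin_sign_mul]
    · linear_combination (sign y₁ / 2) * sqrt_mul_sqrt_one_add_mul_sin_arctan_sqrt (abs_nonneg y₁)
        + Real.sign_mul_abs y₁ / 2
    · linear_combination sign y₁ * div_sqrt_two_mul_sin_pi_div_four |y₁|
        + Real.sign_mul_abs y₁ / 2
  have hyb_half : yb = y₁ / 2 := by
    rw [hyb, sin_neg, mul_neg, half_offset]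
    ring
  refine ⟨hyb_half, ?_⟩
  rw [hxb, cos_neg, hyb_half, ← half_offset, mul_cos_sq_add_mul_sin_sq]
end

section
/- Let θ̄ ∈ [−π/4, π/4] and d ≥ 0, with (as in the midpoint construction) x̄ := d·cos(θ̄), ȳ := y₁/2 where y₁ = y₁. If the construction uses θ̄ and d from the Condition-1 case split, then max{x̄⁴, θ̄⁴, |ȳ|^{φ(|ȳ|)}} ≤ |y₁|^{φ(|y₁|)}, where φ : [0,∞) → [2,4] is non-decreasing with φ(s)=2 for s ≤ 1 and φ(s)=4 for s ≥ 2. -/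
/-!
Write `r = |y₁|`; then `r ^ 2 ≤ r ^ φ r`, since `φ ≥ 2` and `φ = 2` on `[0, 1]`. The angle obeys
`|θ̄| ≤ √r` (`arctan t ≤ t`, and `π / 4 ≤ 1 < √r` when `r > 1`), so `θ̄ ^ 4 ≤ r ^ 2`. Since
`|x̄| ≤ d`, it suffices that `d ^ 2 ≤ r` when `r ≤ 2`, and `d ≤ r` together with `φ r = 4` when
`r ≥ 2`. Finally `s ↦ s ^ φ s` is monotone on `[0, ∞)`, which handles `|ȳ| = r / 2`.
-/

open Real

lemma pow_four_le_pow_four_of_abs_le {x y : ℝ} (h : |x| ≤ |y|) : x ^ 4 ≤ y ^ 4 := by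
  simpa only [(by decide : Even 4).pow_abs] using pow_le_pow_left₀ (abs_nonneg x) h 4

lemma Real.arctan_le_self {t : ℝ} (ht : 0 ≤ t) : arctan t ≤ t := by
  simpa only [tan_arctan] using le_tan (arctan_nonneg.2 ht) (arctan_lt_pi_div_two t)

lemma Real.abs_sign_mul_le (y a : ℝ) : |sign y * a| ≤ |a| := by
  rcases sign_apply_eq y with h | h | h <;> simp [h]

section InterpolatedPower

variable {φ : ℝ → ℝ}

lemma sq_le_rpow_self (hφ_eq : ∀ s : ℝ, 0 ≤ s → s ≤ 1 → φ s = 2)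
    (hφ_ge : ∀ s : ℝ, 0 ≤ s → 2 ≤ φ s) {r : ℝ} (hr : 0 ≤ r) : r ^ 2 ≤ r ^ φ r := by
  rw [← rpow_two]
  rcases le_total r 1 with h | h
  · rw [hφ_eq r hr h]
  · exact rpow_le_rpow_of_exponent_le h (hφ_ge r hr)

lemma monotoneOn_rpow_self (hmono : ∀ s t : ℝ, 0 ≤ s → s ≤ t → φ s ≤ φ t)
    (hnonneg : ∀ s : ℝ, 0 ≤ s → 0 ≤ φ s) {c : ℝ} (hconst : ∀ s : ℝ, 0 ≤ s → s ≤ 1 → φ s = c) :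
    MonotoneOn (fun s => s ^ φ s) (Set.Ici 0) := by
  intro s (hs : 0 ≤ s) t (ht : 0 ≤ t) hst
  show s ^ φ s ≤ t ^ φ t
  rcases le_total t 1 with h | h
  · rw [hconst s hs (hst.trans h), hconst t ht h]
    exact rpow_le_rpow hs hst (hconst t ht h ▸ hnonneg t ht)
  · calc s ^ φ s ≤ t ^ φ s := rpow_le_rpow hs hst (hnonneg s hs)
      _ ≤ t ^ φ t := rpow_le_rpow_of_exponent_le h (hmono s t hs hst)

end InterpolatedPower

noncomputable def midpointAngle (y : ℝ) : ℝ :=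
  if |y| ≤ 1 then sign y * arctan (√|y|) else sign y * (π / 4)

noncomputable def midpointRadius (y : ℝ) : ℝ :=
  if |y| ≤ 1 then (1 / 2) * √|y| * √(1 + |y|) else |y| / √2

lemma abs_midpointAngle_le_sqrt (y : ℝ) : |midpointAngle y| ≤ √|y| := by
  unfold midpointAngle
  split_ifs with h
  · refine (abs_sign_mul_le _ _).trans ?_
    rw [abs_of_nonneg (arctan_nonneg.2 (sqrt_nonneg _))]
    exact arctan_le_self (sqrt_nonneg _)
  · refine (abs_sign_mul_le _ _).trans ?_
    rw [abs_of_nonneg (by positivity)]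
    linarith [pi_le_four, one_le_sqrt.2 (not_le.1 h).le]

lemma midpointAngle_pow_four_le (y : ℝ) : midpointAngle y ^ 4 ≤ |y| ^ 2 := by
  calc midpointAngle y ^ 4 ≤ √|y| ^ 4 :=
        pow_four_le_pow_four_of_abs_le ((abs_midpointAngle_le_sqrt y).trans (le_abs_self _))
    _ = |y| ^ 2 := by rw [show 4 = 2 * 2 by rfl, pow_mul, sq_sqrt (abs_nonneg y)]

lemma sq_midpointRadius_le {y : ℝ} (hy : |y| ≤ 2) : midpointRadius y ^ 2 ≤ |y| := by
  have hr := abs_nonneg y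
  unfold midpointRadius
  split_ifs with h
  · rw [mul_pow, mul_pow, sq_sqrt hr, sq_sqrt (by positivity)]
    nlinarith
  · rw [div_pow, sq_sqrt zero_le_two]
    nlinarith

lemma midpointRadius_pow_four_le {y : ℝ} (hy : 1 < |y|) : midpointRadius y ^ 4 ≤ |y| ^ 4 := by
  rw [midpointRadius, if_neg hy.not_ge]
  exact pow_le_pow_left₀ (by positivity)
    (div_le_self (abs_nonneg y) (one_le_sqrt.2 one_le_two)) 4

/-- the midpoint quantities are dominated by `|y₁|^(φ(|y₁|))`. -/
theorem midpoint_dominated_by_interpolated_power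
    (φ : ℝ → ℝ) (hφmono : ∀ s t : ℝ, 0 ≤ s → s ≤ t → φ s ≤ φ t)
    (hφrange : ∀ s : ℝ, 0 ≤ s → φ s ∈ Set.Icc (2 : ℝ) 4)
    (hφ2 : ∀ s : ℝ, 0 ≤ s → s ≤ 1 → φ s = 2)
    (hφ4 : ∀ s : ℝ, 2 ≤ s → φ s = 4)
    (y₁ θb d xb yb : ℝ)
    (hθb : θb = if |y₁| ≤ 1 then Real.sign y₁ * Real.arctan (Real.sqrt |y₁|)
      else Real.sign y₁ * (π / 4))
    (hd : d = if |y₁| ≤ 1 then (1/2) * Real.sqrt |y₁| * Real.sqrt (1 + |y₁|)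
      else |y₁| / Real.sqrt 2)
    (hxb : xb = d * Real.cos (-θb))
    (hyb : yb = y₁ / 2) :
    max (max (xb ^ 4) (θb ^ 4)) (|yb| ^ φ |yb|) ≤ |y₁| ^ φ |y₁| := by
  change θb = midpointAngle y₁ at hθb
  change d = midpointRadius y₁ at hd
  have hr : 0 ≤ |y₁| := abs_nonneg y₁
  have hφ_ge : ∀ s : ℝ, 0 ≤ s → 2 ≤ φ s := fun s hs => (hφrange s hs).1
  have hsq : |y₁| ^ 2 ≤ |y₁| ^ φ |y₁| := sq_le_rpow_self hφ2 hφ_ge hr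
  have hxd : xb ^ 4 ≤ d ^ 4 := pow_four_le_pow_four_of_abs_le <| by
    rw [hxb, abs_mul]
    exact mul_le_of_le_one_right (abs_nonneg d) (abs_cos_le_one _)
  refine max_le (max_le (hxd.trans ?_) (hθb ▸ (midpointAngle_pow_four_le y₁).trans hsq)) ?_
  · rcases le_total |y₁| 2 with h | h
    · calc d ^ 4 = (d ^ 2) ^ 2 := by ring
        _ ≤ |y₁| ^ 2 := pow_le_pow_left₀ (sq_nonneg d) (hd ▸ sq_midpointRadius_le h) 2
        _ ≤ |y₁| ^ φ |y₁| := hsq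
    · rw [hφ4 _ h, rpow_ofNat, hd]
      exact midpointRadius_pow_four_le (by linarith)
  · have hmono := monotoneOn_rpow_self hφmono (fun s hs => zero_le_two.trans (hφ_ge s hs)) hφ2
    rw [hyb, abs_div, abs_two]
    exact hmono (div_nonneg hr zero_le_two) hr (by linarith)
end

section
/- Feasibility of explicit steering (Condition 2): Let N ≥ 8 be an integer and h > 0. For every initial state x₀ ∈ ℝ⁵ there exists an input sequence u : [0:N) → ℝ² such that the solution x : [0:N] → ℝ⁵ of the unicycle model with x(0) = x₀ satisfies x(t) = 0 for all t in [1+7T : N], where T := ⌊(N−1)/7⌋, and moreover ‖x(t)‖ ≤ c·max{‖x₀‖^{1/2}, ‖x₀‖} for all t ∈ [1 : 1+7T), where c := 2·(1+h²)^{1/2}·(9/4 + 4/(h²·max{1,(N−8)/7}²))^{1/2}. -/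
open Real

noncomputable section

namespace UnicycleSteering

section Knots

variable (T : ℕ) (k : ℕ → ℝ)

def knotInterp (t : ℕ) : ℝ :=
  k (t / T) + (t % T : ℕ) / T * (k (t / T + 1) - k (t / T))

def knotSlope (t : ℕ) : ℝ := (k (t / T + 1) - k (t / T)) / T

variable {T}

lemma knotInterp_succ (hT : 0 < T) (t : ℕ) :
    knotInterp T k (t + 1) = knotInterp T k t + knotSlope T k t := by
  have hT' : (T : ℝ) ≠ 0 := by positivity
  obtain ⟨q, r, hr, rfl⟩ : ∃ q r, r < T ∧ t = r + T * q :=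
    ⟨t / T, t % T, Nat.mod_lt t hT, (Nat.mod_add_div t T).symm⟩
  have hdiv : ∀ s, (s + T * q) / T = s / T + q := fun s => by
    rw [Nat.add_mul_div_left _ _ hT]
  rw [show r + T * q + 1 = (r + 1) + T * q by ring]
  simp only [knotInterp, knotSlope, hdiv, Nat.add_mul_mod_self_left,
    Nat.div_eq_of_lt hr, Nat.mod_eq_of_lt hr, zero_add]
  rcases (show r + 1 ≤ T from hr).lt_or_eq with hr1 | hr1
  · rw [Nat.div_eq_of_lt hr1, Nat.mod_eq_of_lt hr1, zero_add]
    push_cast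
    ring
  · rw [hr1, Nat.div_self hT, Nat.mod_self, add_comm 1 q]
    have : (r : ℝ) = T - 1 := by rw [← hr1]; push_cast; ring
    field_simp
    rw [this]
    ring

lemma knotInterp_of_succ_eq {t : ℕ} (h : k (t / T + 1) = k (t / T)) :
    knotInterp T k t = k (t / T) := by
  simp [knotInterp, h]

lemma knotSlope_of_succ_eq {t : ℕ} (h : k (t / T + 1) = k (t / T)) : knotSlope T k t = 0 := by
  simp [knotSlope, h]

lemma abs_knotInterp_le (hT : 0 < T) {B : ℝ} (hk : ∀ i, |k i| ≤ B) (t : ℕ) :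
    |knotInterp T k t| ≤ B := by
  set μ : ℝ := (t % T : ℕ) / T
  have hμ0 : 0 ≤ μ := by positivity
  have hμ1 : μ ≤ 1 := div_le_one_of_le₀ (by exact_mod_cast (Nat.mod_lt t hT).le) (by positivity)
  calc |knotInterp T k t| = |(1 - μ) * k (t / T) + μ * k (t / T + 1)| := by
        congr 1; simp only [knotInterp, μ]; ring
    _ ≤ (1 - μ) * |k (t / T)| + μ * |k (t / T + 1)| := by
        refine (abs_add_le _ _).trans ?_
        rw [abs_mul, abs_mul, abs_of_nonneg (sub_nonneg.2 hμ1), abs_of_nonneg hμ0]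
    _ ≤ (1 - μ) * B + μ * B :=
        add_le_add (mul_le_mul_of_nonneg_left (hk _) (by linarith))
          (mul_le_mul_of_nonneg_left (hk _) hμ0)
    _ = B := by ring

lemma abs_knotSlope_le {B : ℝ} (hk : ∀ i, |k i| ≤ B) (t : ℕ) :
    |knotSlope T k t| ≤ 2 * B / T := by
  rw [knotSlope, abs_div, Nat.abs_cast, two_mul]
  gcongr
  exact (abs_sub _ _).trans (add_le_add (hk _) (hk _))

lemma knotInterp_eq_zero_and_knotSlope_eq_zero (hT : 0 < T) {j : ℕ} (hk : ∀ i, j ≤ i → k i = 0)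
    {t : ℕ} (ht : j * T ≤ t) : knotInterp T k t = 0 ∧ knotSlope T k t = 0 := by
  have hj : j ≤ t / T := (Nat.le_div_iff_mul_le hT).2 ht
  simp [knotInterp, knotSlope, hk _ hj, hk _ (hj.trans (Nat.le_succ _))]

def DriveOrTurn (kp ks kθ : ℕ → ℝ) (f : ℝ → ℝ) : Prop :=
  ∀ i, (kθ (i + 1) = kθ i ∧ kp (i + 1) - kp i = (ks (i + 1) - ks i) * f (kθ i)) ∨
    (kp (i + 1) = kp i ∧ ks (i + 1) = ks i)

lemma knotInterp_succ_of_driveOrTurn (hT : 0 < T) {kp ks kθ : ℕ → ℝ} {f : ℝ → ℝ}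
    (hk : DriveOrTurn kp ks kθ f) (t : ℕ) :
    knotInterp T kp (t + 1) = knotInterp T kp t + knotSlope T ks t * f (knotInterp T kθ t) := by
  rw [knotInterp_succ kp hT]
  congr 1
  rcases hk (t / T) with ⟨hθ, hp⟩ | ⟨hp, hs⟩
  · rw [knotInterp_of_succ_eq kθ hθ, knotSlope, knotSlope, hp]
    ring
  · rw [knotSlope_of_succ_eq kp hp, knotSlope_of_succ_eq ks hs, zero_mul]

end Knots

def KinematicSol (h : ℝ) (x : ℕ → EuclideanSpace ℝ (Fin 5)) : Prop :=
  ∀ t : ℕ,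
    x (t + 1) 0 = x t 0 + h * x t 3 * cos (x t 2) ∧
    x (t + 1) 1 = x t 1 + h * x t 3 * sin (x t 2) ∧
    x (t + 1) 2 = x t 2 + h * x t 4

lemma KinematicSol.exists_unicycleSol {m J k κ h : ℝ} (hm : m ≠ 0) (hJ : J ≠ 0) (hh : h ≠ 0)
    {x : ℕ → EuclideanSpace ℝ (Fin 5)} (hx : KinematicSol h x) :
    ∃ u, UnicycleSol m J k κ h u x :=
  ⟨fun t => (m / h * (x (t + 1) 3 - x t 3) + k * x t 3, J / h * (x (t + 1) 4 - x t 4) + κ * x t 4),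
    fun t => ⟨(hx t).1, (hx t).2.1, (hx t).2.2, by field_simp; ring, by field_simp; ring⟩⟩

section Path

variable (T : ℕ) (h : ℝ) (x₀ : EuclideanSpace ℝ (Fin 5)) (kx ky kθ ks : ℕ → ℝ)

-- The knots start at time `1`: the pose `x 1` is determined by `x₀` alone.
def knotPath : ℕ → EuclideanSpace ℝ (Fin 5)
  | 0 => x₀
  | t + 1 => !₂[knotInterp T kx t, knotInterp T ky t, knotInterp T kθ t,
      knotSlope T ks t / h, knotSlope T kθ t / h]

variable {T h x₀ kx ky kθ ks}

lemma kinematicSol_knotPath (hT : 0 < T) (hh : h ≠ 0)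
    (hx : kx 0 = x₀ 0 + h * x₀ 3 * cos (x₀ 2)) (hy : ky 0 = x₀ 1 + h * x₀ 3 * sin (x₀ 2))
    (hθ : kθ 0 = x₀ 2 + h * x₀ 4) (hcos : DriveOrTurn kx ks kθ cos)
    (hsin : DriveOrTurn ky ks kθ sin) :
    KinematicSol h (knotPath T h x₀ kx ky kθ ks) := by
  rintro (_ | t)
  · simpa [knotPath, knotInterp] using ⟨hx, hy, hθ⟩
  · simp only [knotPath, PiLp.toLp_apply, Matrix.cons_val]
    refine ⟨?_, ?_, ?_⟩
    · rw [knotInterp_succ_of_driveOrTurn hT hcos]; field_simp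
    · rw [knotInterp_succ_of_driveOrTurn hT hsin]; field_simp
    · rw [knotInterp_succ kθ hT]; field_simp

lemma knotPath_eq_zero (hT : 0 < T) {j : ℕ}
    (hk : ∀ i, j ≤ i → kx i = 0 ∧ ky i = 0 ∧ kθ i = 0 ∧ ks i = 0) {t : ℕ} (ht : 1 + j * T ≤ t) :
    knotPath T h x₀ kx ky kθ ks t = 0 := by
  obtain ⟨t, rfl⟩ : ∃ s, t = s + 1 := ⟨t - 1, by omega⟩
  have hz := fun k (hk : ∀ i, j ≤ i → k i = 0) =>
    knotInterp_eq_zero_and_knotSlope_eq_zero k hT hk (t := t) (by omega)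
  obtain ⟨hx, -⟩ := hz kx fun i hi => (hk i hi).1
  obtain ⟨hy, -⟩ := hz ky fun i hi => (hk i hi).2.1
  obtain ⟨hθ, hθ'⟩ := hz kθ fun i hi => (hk i hi).2.2.1
  obtain ⟨-, hs⟩ := hz ks fun i hi => (hk i hi).2.2.2
  ext i
  fin_cases i <;> simp [knotPath, hx, hy, hθ, hθ', hs]

lemma sq_norm_knotPath_le (hT : 0 < T) {B : ℝ}
    (hk : ∀ i, |kx i| ≤ B ∧ |ky i| ≤ B ∧ |kθ i| ≤ B ∧ |ks i| ≤ B) (t : ℕ) :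
    ‖knotPath T h x₀ kx ky kθ ks (t + 1)‖ ^ 2 ≤ 3 * B ^ 2 + 2 * (2 * B / (h * T)) ^ 2 := by
  have sq_le {y b : ℝ} (hy : |y| ≤ b) : y ^ 2 ≤ b ^ 2 := sq_le_sq' (abs_le.1 hy).1 (abs_le.1 hy).2
  have slope_sq_le {k : ℕ → ℝ} (hk : ∀ i, |k i| ≤ B) :
      (knotSlope T k t / h) ^ 2 ≤ (2 * B / (h * T)) ^ 2 := by
    rw [div_pow, show 2 * B / (h * T) = 2 * B / T / h by ring, div_pow]
    exact div_le_div_of_nonneg_right (sq_le (abs_knotSlope_le k hk t)) (sq_nonneg h)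
  have hx := sq_le (abs_knotInterp_le kx hT (fun i => (hk i).1) t)
  have hy := sq_le (abs_knotInterp_le ky hT (fun i => (hk i).2.1) t)
  have hθ := sq_le (abs_knotInterp_le kθ hT (fun i => (hk i).2.2.1) t)
  have hs := slope_sq_le fun i => (hk i).2.2.2
  have hω := slope_sq_le fun i => (hk i).2.2.1
  simp only [EuclideanSpace.real_norm_sq_eq, Fin.sum_univ_five, knotPath, Matrix.cons_val]
  linarith

end Path

lemma abs_getD_le {l : List ℝ} {B : ℝ} (hl : ∀ x ∈ l, |x| ≤ B) (hB : 0 ≤ B) (i : ℕ) :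
    |l.getD i 0| ≤ B := by
  rw [List.getD_eq_getElem?_getD]
  cases hi : l[i]? with
  | none => simpa using hB
  | some x => exact hl x (List.mem_of_getElem? hi)

section Maneuver

variable (a b φ θ d : ℝ)

def maneuverX : ℕ → ℝ := ([a, a, 0, 0, d * cos θ, d * cos θ, 0].getD · 0)

def maneuverY : ℕ → ℝ := ([b, b, b, b, b / 2, b / 2, 0].getD · 0)

def maneuverHeading : ℕ → ℝ := ([φ, 0, 0, θ, θ, -θ, -θ].getD · 0)

-- Arc length offset by `a`, so that it ends at `0` like the other knot sequences.
def maneuverArc : ℕ → ℝ := ([a, a, 0, 0, d, d, 0].getD · 0)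

variable {a b φ θ d}

lemma maneuver_eq_zero {i : ℕ} (hi : 7 ≤ i) :
    maneuverX a θ d i = 0 ∧ maneuverY b i = 0 ∧ maneuverHeading φ θ i = 0 ∧
      maneuverArc a d i = 0 := by
  refine ⟨?_, ?_, ?_, ?_⟩ <;> exact List.getD_eq_default _ _ (by simpa using hi)

lemma driveOrTurn_maneuverX :
    DriveOrTurn (maneuverX a θ d) (maneuverArc a d) (maneuverHeading φ θ) cos := by
  intro i
  rcases lt_or_ge i 7 with hi | hi
  · interval_cases i <;> simp [maneuverX, maneuverArc, maneuverHeading]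
  · right
    simp [maneuverX, maneuverArc, hi, Nat.le_succ_of_le hi]

lemma driveOrTurn_maneuverY (hsin : d * sin θ = -b / 2) :
    DriveOrTurn (maneuverY b) (maneuverArc a d) (maneuverHeading φ θ) sin := by
  intro i
  rcases lt_or_ge i 7 with hi | hi
  · interval_cases i <;> simp [maneuverY, maneuverArc, maneuverHeading] <;>
      exact Or.inl (by linarith)
  · right
    simp [maneuverY, maneuverArc, hi, Nat.le_succ_of_le hi]

lemma abs_maneuver_le {B : ℝ} (ha : |a| ≤ B) (hb : |b| ≤ B) (hφ : |φ| ≤ B) (hθ : |θ| ≤ B)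
    (hd₀ : 0 ≤ d) (hd : d ≤ B) (i : ℕ) :
    |maneuverX a θ d i| ≤ B ∧ |maneuverY b i| ≤ B ∧ |maneuverHeading φ θ i| ≤ B ∧
      |maneuverArc a d i| ≤ B := by
  have hB : 0 ≤ B := (abs_nonneg a).trans ha
  have hdc : d * |cos θ| ≤ B := (mul_le_of_le_one_right hd₀ (abs_cos_le_one θ)).trans hd
  have hb2 : |b / 2| ≤ B := by
    rw [abs_div, abs_of_pos (two_pos : (0 : ℝ) < 2)]
    linarith [abs_nonneg b]
  refine ⟨abs_getD_le ?_ hB i, abs_getD_le ?_ hB i, abs_getD_le ?_ hB i, abs_getD_le ?_ hB i⟩ <;>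
    simp [ha, hb, hφ, hθ, hB, hdc, hb2, abs_of_nonneg hd₀, hd]

end Maneuver

lemma abs_arctan_le_abs (y : ℝ) : |arctan y| ≤ |y| := by
  have key {y : ℝ} (hy : 0 ≤ y) : arctan y ≤ y :=
    (le_tan (arctan_nonneg.2 hy) (arctan_lt_pi_div_two y)).trans_eq (tan_arctan y)
  rcases le_total 0 y with hy | hy
  · rw [abs_of_nonneg (arctan_nonneg.2 hy), abs_of_nonneg hy]
    exact key hy
  · rw [abs_of_nonpos (arctan_le_zero.2 hy), abs_of_nonpos hy, ← arctan_neg]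
    exact key (neg_nonneg.2 hy)

lemma exists_heading_distance {b B : ℝ} (hb : |b| ≤ B) (hb₂ : |b| ≤ B ^ 2) :
    ∃ θ d, d * sin θ = -b / 2 ∧ |θ| ≤ B ∧ 0 ≤ d ∧ d ≤ B := by
  have hB : 0 ≤ B := (abs_nonneg b).trans hb
  set y := -b / √|b|
  have hy : y ^ 2 = |b| := by
    rcases eq_or_ne b 0 with rfl | hb₀
    · simp [y]
    · rw [div_pow, neg_sq, sq_sqrt (abs_nonneg b), ← sq_abs, sq, mul_div_cancel_right₀ _
        (abs_pos.2 hb₀).ne']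
  refine ⟨arctan y, √|b| * √(1 + |b|) / 2, ?_, ?_, by positivity, ?_⟩
  · rw [sin_arctan, hy]
    have : √(1 + |b|) ≠ 0 := by positivity
    rcases eq_or_ne b 0 with rfl | hb₀
    · simp
    · have : √|b| ≠ 0 := by positivity
      field_simp
      exact mul_div_cancel₀ _ this
  · calc |arctan y| ≤ |y| := abs_arctan_le_abs y
      _ = √|b| := by rw [← sqrt_sq_eq_abs, hy]
      _ ≤ B := (sqrt_le_left hB).2 hb₂
  · rw [← sqrt_mul (abs_nonneg b), div_le_iff₀ two_pos, sqrt_le_left (by positivity)]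
    nlinarith [abs_nonneg b]

lemma le_sq_max_rpow_half_self {r : ℝ} (hr : 0 ≤ r) : r ≤ max (r ^ (1 / 2 : ℝ)) r ^ 2 :=
  calc r = (r ^ (1 / 2 : ℝ)) ^ 2 := by rw [← sqrt_eq_rpow, sq_sqrt hr]
    _ ≤ max (r ^ (1 / 2 : ℝ)) r ^ 2 := by gcongr; exact le_max_left _ _

lemma sq_firstPose_le (h : ℝ) (x₀ : EuclideanSpace ℝ (Fin 5)) :
    (x₀ 0 + h * x₀ 3 * cos (x₀ 2)) ^ 2 + (x₀ 1 + h * x₀ 3 * sin (x₀ 2)) ^ 2 +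
      (x₀ 2 + h * x₀ 4) ^ 2 ≤ (1 + h ^ 2) * ‖x₀‖ ^ 2 := by
  have hv : (x₀ 3 * cos (x₀ 2)) ^ 2 + (x₀ 3 * sin (x₀ 2)) ^ 2 = x₀ 3 ^ 2 := by
    rw [mul_pow, mul_pow, ← mul_add, cos_sq_add_sin_sq, mul_one]
  rw [EuclideanSpace.real_norm_sq_eq, Fin.sum_univ_five]
  nlinarith [sq_nonneg (h * x₀ 0 - x₀ 3 * cos (x₀ 2)), sq_nonneg (h * x₀ 1 - x₀ 3 * sin (x₀ 2)),
    sq_nonneg (h * x₀ 2 - x₀ 4)]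

lemma abs_firstPose_le (h : ℝ) {x₀ : EuclideanSpace ℝ (Fin 5)} {X : ℝ} (hX : ‖x₀‖ ≤ X)
    (hX₂ : ‖x₀‖ ≤ X ^ 2) :
    |x₀ 0 + h * x₀ 3 * cos (x₀ 2)| ≤ √(1 + h ^ 2) * X ∧
      |x₀ 1 + h * x₀ 3 * sin (x₀ 2)| ≤ √(1 + h ^ 2) * X ∧
      |x₀ 1 + h * x₀ 3 * sin (x₀ 2)| ≤ (√(1 + h ^ 2) * X) ^ 2 ∧
      |x₀ 2 + h * x₀ 4| ≤ √(1 + h ^ 2) * X := by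
  have hpose := sq_firstPose_le h x₀
  have hC : √(1 + h ^ 2) ^ 2 = 1 + h ^ 2 := sq_sqrt (by positivity)
  have habs {z : ℝ} (hz : z ^ 2 ≤ (1 + h ^ 2) * ‖x₀‖ ^ 2) : |z| ≤ √(1 + h ^ 2) * ‖x₀‖ :=
    abs_le_of_sq_le_sq (by rwa [mul_pow, hC]) (by positivity)
  have hX' : √(1 + h ^ 2) * ‖x₀‖ ≤ √(1 + h ^ 2) * X := by gcongr
  refine ⟨(habs (by nlinarith)).trans hX', (habs (by nlinarith)).trans hX', ?_,
    (habs (by nlinarith)).trans hX'⟩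
  calc |x₀ 1 + h * x₀ 3 * sin (x₀ 2)| ≤ √(1 + h ^ 2) * ‖x₀‖ := habs (by nlinarith)
    _ ≤ (1 + h ^ 2) * X ^ 2 := by
        gcongr
        rw [sqrt_le_left (by positivity)]
        nlinarith
    _ = (√(1 + h ^ 2) * X) ^ 2 := by rw [mul_pow, hC]

lemma sq_bound_le_steeringConstant {h M : ℝ} {T : ℕ} (hh : 0 < h) (hM : 1 ≤ M) (hMT : M ≤ T)
    (X : ℝ) :
    3 * (√(1 + h ^ 2) * X) ^ 2 + 2 * (2 * (√(1 + h ^ 2) * X) / (h * T)) ^ 2 ≤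
      (2 * √(1 + h ^ 2) * √(9 / 4 + 4 / (h ^ 2 * M ^ 2)) * X) ^ 2 := by
  have hC : √(1 + h ^ 2) ^ 2 = 1 + h ^ 2 := sq_sqrt (by positivity)
  have hq : 8 / (h * T) ^ 2 ≤ 16 / (h ^ 2 * M ^ 2) := by
    rw [mul_pow]
    gcongr
    norm_num
  calc 3 * (√(1 + h ^ 2) * X) ^ 2 + 2 * (2 * (√(1 + h ^ 2) * X) / (h * T)) ^ 2
        = (1 + h ^ 2) * X ^ 2 * (3 + 8 / (h * T) ^ 2) := by
          simp only [div_pow, mul_pow, hC]; ring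
    _ ≤ (1 + h ^ 2) * X ^ 2 * (9 + 16 / (h ^ 2 * M ^ 2)) := by gcongr; linarith
    _ = _ := by rw [mul_pow, mul_pow, mul_pow, hC, sq_sqrt (by positivity)]; ring

end UnicycleSteering

end

open UnicycleSteering

theorem unicycle_explicit_steering_general
    (m J k κ h : ℝ) (hm : 0 < m) (hJ : 0 < J) (hh : 0 < h)
    (N : ℕ) (hN : 8 ≤ N) :
    ∀ x₀ : EuclideanSpace ℝ (Fin 5),
      ∃ (u : ℕ → ℝ × ℝ) (x : ℕ → EuclideanSpace ℝ (Fin 5)),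
        x 0 = x₀ ∧
        UnicycleSol m J k κ h u x ∧
        (∀ t : ℕ, 1 + 7 * ((N - 1) / 7) ≤ t → t ≤ N → x t = 0) ∧
        (∀ t : ℕ, 1 ≤ t → t < 1 + 7 * ((N - 1) / 7) →
          ‖x t‖ ≤
            (2 * Real.sqrt (1 + h ^ 2) *
              Real.sqrt (9/4 + 4 / (h ^ 2 * max 1 (((N : ℝ) - 8) / 7) ^ 2))) *
            max (‖x₀‖ ^ (1/2 : ℝ)) ‖x₀‖) := by
  intro x₀
  set T := (N - 1) / 7
  have hT : 0 < T := by omega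
  set X := max (‖x₀‖ ^ (1 / 2 : ℝ)) ‖x₀‖
  set B := √(1 + h ^ 2) * X
  obtain ⟨ha, hb, hb₂, hφ⟩ :=
    abs_firstPose_le h (le_max_right _ _) (le_sq_max_rpow_half_self (norm_nonneg x₀))
  obtain ⟨θ, d, hsin, hθ, hd₀, hd⟩ := exists_heading_distance hb hb₂
  set x := knotPath T h x₀ (maneuverX _ θ d) (maneuverY _) (maneuverHeading _ θ) (maneuverArc _ d)
  obtain ⟨u, hu⟩ := (kinematicSol_knotPath (x₀ := x₀) hT hh.ne' rfl rfl rfl driveOrTurn_maneuverX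
    (driveOrTurn_maneuverY hsin)).exists_unicycleSol (k := k) (κ := κ) hm.ne' hJ.ne' hh.ne'
  refine ⟨u, x, rfl, hu, fun t ht _ => knotPath_eq_zero hT (fun i => maneuver_eq_zero) ht, ?_⟩
  rintro (_ | t) ht -
  · omega
  have hM : max 1 (((N : ℝ) - 8) / 7) ≤ T := by
    have : (N : ℝ) ≤ 7 * T + 7 := by exact_mod_cast (show N ≤ 7 * T + 7 by omega)
    exact max_le (by exact_mod_cast hT) (by linarith)
  refine (pow_le_pow_iff_left₀ (norm_nonneg _) ?_ two_ne_zero).1 ?_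
  · exact mul_nonneg (by positivity) ((norm_nonneg x₀).trans (le_max_right _ _))
  calc ‖x (t + 1)‖ ^ 2 ≤ 3 * B ^ 2 + 2 * (2 * B / (h * T)) ^ 2 :=
        sq_norm_knotPath_le hT (abs_maneuver_le ha hb hφ hθ hd₀ hd) t
    _ ≤ _ := sq_bound_le_steeringConstant hh (le_max_left _ _) hM X

/-- explicit steering of the unicycle to the origin within the
prediction horizon, with a uniform bound on the intermediate states. -/
theorem unicycle_explicit_steering
    (m J k κ h : ℝ) (hm : 0 < m) (hJ : 0 < J) (hk : 0 < k) (hκ : 0 < κ) (hh : 0 < h)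
    (N : ℕ) (hN : 8 ≤ N) :
    ∀ x₀ : EuclideanSpace ℝ (Fin 5),
      ∃ (u : ℕ → ℝ × ℝ) (x : ℕ → EuclideanSpace ℝ (Fin 5)),
        x 0 = x₀ ∧
        UnicycleSol m J k κ h u x ∧
        (∀ t : ℕ, 1 + 7 * ((N - 1) / 7) ≤ t → t ≤ N → x t = 0) ∧
        (∀ t : ℕ, 1 ≤ t → t < 1 + 7 * ((N - 1) / 7) →
          ‖x t‖ ≤
            (2 * Real.sqrt (1 + h ^ 2) *
              Real.sqrt (9/4 + 4 / (h ^ 2 * max 1 (((N : ℝ) - 8) / 7) ^ 2))) *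
            max (‖x₀‖ ^ (1/2 : ℝ)) ‖x₀‖) :=
  unicycle_explicit_steering_general m J k κ h hm hJ hh N hN
end

section
/- The norm function V(x) = ‖x‖ (Euclidean norm on ℝ⁵) is an EGDCLF of order N for the discrete-time unicycle model, with α ∈ (0,1) arbitrary and state-dependent weights σ_i(x) = (1−α)/((N−1)·c) · min{‖x‖^{1/2}, 1} for i < N (with value (1−α)/((N−1)c) when ‖x‖ ≥ 1 or x = 0) and σ_N(x) = 1 − Σ_{i<N} σ_i(x), provided N ≥ 8, where c := 2·(1+h²)^{1/2}·(9/4 + 4/(h²·max{1,(N−8)/7}²))^{1/2}. In particular: properties (P1)–(P4) hold with χ₁(r) = r, χ₂(r) = r, φ(r) = (N−1)·c·max{r^{1/2}, r}, λ̃ = e^{α/2}, μ̃ = 1/2. -/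
/-!
The weights `σ i`, `i < N`, all equal `β ψ` with `β = (1 - α) / ((N - 1) c)` and
`ψ = min {‖x‖ ^ (1/2), 1}`, and `σ N` takes up the rest of the unit mass; since `c ≥ 2`, also
`σ N ≥ β ψ`. This gives positivity, and (P3) reduces to `r ≤ ψ · max {r ^ (1/2), r}`.

For (P2) the unicycle is parked at the origin in four steps: stop and turn to the heading `ψ`;
drive a distance `d₁` along `ψ` while turning to `-ψ`; drive `d₂` along `-ψ` while turning to `0`;
stop. If `p` is the position after the first step, solving
`d₁ (cos ψ, sin ψ) + d₂ (cos ψ, -sin ψ) = -p` gives `ψ |dᵢ| = O(‖x₀‖)`, because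
`cos ψ ≥ 1/2` and `sin ψ ≥ ψ/2`; with `ψ² ≤ ‖x₀‖` this yields
`ψ (‖x₁‖ + ‖x₂‖ + ‖x₃‖) ≤ (18 + 11h + 9/h) ‖x₀‖ ≤ (N - 1) c ‖x₀‖`, which is the descent (P2).

(P4) follows from `e^{-τ} = e^{-τ/2} e^{-τ/2}` and `e^{-τ/2} ≤ e^{α/2}`.
-/

open Real Finset

theorem PiLp.norm_le_sum_norm {ι : Type*} [Fintype ι] {β : ι → Type*}
    [∀ i, SeminormedAddCommGroup (β i)] (x : PiLp 2 β) : ‖x‖ ≤ ∑ i, ‖x i‖ := by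
  refine le_of_sq_le_sq ?_ (by positivity)
  rw [PiLp.norm_sq_eq_of_L2]
  exact sum_sq_le_sq_sum_of_nonneg fun _ _ ↦ norm_nonneg _

theorem norm_vec5_le_sum_abs (v₀ v₁ v₂ v₃ v₄ : ℝ) :
    ‖!₂[v₀, v₁, v₂, v₃, v₄]‖ ≤ |v₀| + |v₁| + |v₂| + |v₃| + |v₄| := by
  simpa [Fin.sum_univ_five] using PiLp.norm_le_sum_norm !₂[v₀, v₁, v₂, v₃, v₄]

theorem abs_add_mul_mul_le {y z c h r : ℝ} (hy : |y| ≤ r) (hz : |z| ≤ r) (hc : |c| ≤ 1)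
    (hh : 0 ≤ h) : |y + h * z * c| ≤ (1 + h) * r := by
  calc |y + h * z * c| ≤ |y| + h * (|z| * |c|) := by
        rw [mul_assoc, ← abs_mul, ← abs_of_nonneg hh, ← abs_mul, abs_of_nonneg hh]
        exact abs_add_le _ _
    _ ≤ r + h * (r * 1) := by gcongr; exact (abs_nonneg z).trans hz
    _ = (1 + h) * r := by ring

theorem mul_abs_div_le {ψ w W h : ℝ} (hh : 0 < h) (hw : ψ * |w| ≤ W) : ψ * |w / h| ≤ W / h := by
  rw [abs_div, abs_of_pos hh, ← mul_div_assoc]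
  exact div_le_div_of_nonneg_right hw hh.le

theorem half_le_cos {x : ℝ} (hx : |x| ≤ 1) : 1 / 2 ≤ cos x := by
  have := one_sub_sq_div_two_le_cos (x := x)
  nlinarith [sq_le_one_iff_abs_le_one x |>.mpr hx]

theorem half_mul_le_sin {x : ℝ} (hx₀ : 0 ≤ x) (hx₁ : x ≤ 1) : x / 2 ≤ sin x := by
  have hπ : 1 ≤ π / 2 := by linarith [pi_gt_three]
  calc x / 2 ≤ 2 / π * x := by
        rw [div_mul_eq_mul_div, le_div_iff₀ pi_pos]; nlinarith [pi_lt_four]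
    _ ≤ sin x := mul_le_sin hx₀ (hx₁.trans hπ)

theorem mul_abs_div_cos_add_abs_div_sin_le {ψ : ℝ} (hψ₀ : 0 < ψ) (hψ₁ : ψ ≤ 1) (a b : ℝ) :
    ψ * (|a / cos ψ| + |b / sin ψ|) ≤ 2 * (|a| + |b|) := by
  have hcos := half_le_cos (abs_le.mpr ⟨by linarith, hψ₁⟩)
  have hsin := half_mul_le_sin hψ₀.le hψ₁
  have hsin₀ : 0 < sin ψ := by linarith
  rw [abs_div, abs_div, abs_of_pos (by linarith : 0 < cos ψ), abs_of_pos hsin₀, mul_add,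
    mul_div_left_comm, mul_div_left_comm ψ]
  have hc : ψ / cos ψ ≤ 2 := (div_le_iff₀ (by linarith)).mpr (by linarith)
  have hs : ψ / sin ψ ≤ 2 := (div_le_iff₀ hsin₀).mpr (by linarith)
  nlinarith [abs_nonneg a, abs_nonneg b]

theorem max_rpow_half_mul_exp_le {r α τ : ℝ} (hr : 0 ≤ r) (hα : 0 ≤ α) (hτ : -α ≤ τ) :
    max ((r * exp (-τ)) ^ (1 / 2 : ℝ)) (r * exp (-τ)) ≤
      max (r ^ (1 / 2 : ℝ)) r * exp (α / 2) * exp (-(1 / 2) * τ) := by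
  have hsplit : exp (-τ) = exp (-(1 / 2) * τ) * exp (-(1 / 2) * τ) := by rw [← exp_add]; ring_nf
  have hroot : (r * exp (-τ)) ^ (1 / 2 : ℝ) = r ^ (1 / 2 : ℝ) * exp (-(1 / 2) * τ) := by
    rw [mul_rpow hr (exp_pos _).le, ← exp_mul]; ring_nf
  have hone : 1 ≤ exp (α / 2) := one_le_exp (by linarith)
  have hhalf : exp (-(1 / 2) * τ) ≤ exp (α / 2) := exp_le_exp.mpr (by linarith)
  apply max_le
  · rw [hroot, mul_assoc]
    gcongr
    · exact le_max_left _ _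
    · exact le_mul_of_one_le_left (exp_pos _).le hone
  · rw [hsplit, ← mul_assoc]
    gcongr
    exact le_max_right _ _

noncomputable def sqrtWeight (r : ℝ) : ℝ := if 0 < r ∧ r < 1 then r ^ (1 / 2 : ℝ) else 1

theorem sqrtWeight_pos (r : ℝ) : 0 < sqrtWeight r := by
  unfold sqrtWeight
  split_ifs with hr
  exacts [rpow_pos_of_pos hr.1 _, one_pos]

theorem sqrtWeight_le_one (r : ℝ) : sqrtWeight r ≤ 1 := by
  unfold sqrtWeight
  split_ifs with hr
  exacts [rpow_le_one hr.1.le hr.2.le (by norm_num), le_rfl]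

theorem rpow_half_mul_rpow_half {r : ℝ} (hr : 0 ≤ r) :
    r ^ (1 / 2 : ℝ) * r ^ (1 / 2 : ℝ) = r := by
  rw [← sqrt_eq_rpow, mul_self_sqrt hr]

theorem sqrtWeight_sq_le {r : ℝ} (hr : 0 < r) : sqrtWeight r ^ 2 ≤ r := by
  unfold sqrtWeight
  split_ifs with h
  · rw [sq, rpow_half_mul_rpow_half hr.le]
  · simpa using le_of_not_gt (not_and.mp h hr)

theorem le_sqrtWeight_mul_max {r : ℝ} (hr : 0 ≤ r) :
    r ≤ sqrtWeight r * max (r ^ (1 / 2 : ℝ)) r := by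
  unfold sqrtWeight
  split_ifs with h
  · calc r = r ^ (1 / 2 : ℝ) * r ^ (1 / 2 : ℝ) := (rpow_half_mul_rpow_half hr).symm
      _ ≤ _ := by gcongr; exact le_max_left _ _
  · simp

theorem natCast_mul_div_mul_sqrtWeight_le_one {N : ℕ} (hN : 2 ≤ N) {a c : ℝ} (ha₁ : a ≤ 1)
    (hc : 2 ≤ c) (r : ℝ) : N * (a / ((N - 1) * c) * sqrtWeight r) ≤ 1 := by
  have hN' : (2 : ℝ) ≤ N := by exact_mod_cast hN
  rw [← mul_assoc, mul_div_assoc', div_mul_eq_mul_div, div_le_one (by nlinarith)]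
  calc N * a * sqrtWeight r ≤ N * 1 * 1 :=
        mul_le_mul (mul_le_mul_of_nonneg_left ha₁ (by positivity)) (sqrtWeight_le_one r)
          (sqrtWeight_pos r).le (by positivity)
    _ ≤ (N - 1) * c := by nlinarith

theorem sum_Icc_eq_one_of_eq_one_sub {σ : ℕ → ℝ} {N : ℕ} (hN : 1 ≤ N)
    (hσN : σ N = 1 - ∑ i ∈ Ico 1 N, σ i) : ∑ i ∈ Icc 1 N, σ i = 1 := by
  rw [← Ico_insert_right hN, sum_insert (by simp), hσN, sub_add_cancel]

theorem le_of_mem_Icc_of_eq_one_sub {σ : ℕ → ℝ} {N : ℕ} {s : ℝ}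
    (hs : ∀ i, 1 ≤ i → i < N → σ i = s) (hσN : σ N = 1 - ∑ i ∈ Ico 1 N, σ i)
    (hNs : N * s ≤ 1) : ∀ i ∈ Icc 1 N, s ≤ σ i := by
  intro i hi
  obtain ⟨h₁, h₂⟩ := mem_Icc.mp hi
  obtain rfl | h₂ := h₂.eq_or_lt
  · rw [hσN, sum_congr rfl fun j hj ↦ hs j (mem_Ico.mp hj).1 (mem_Ico.mp hj).2, sum_const,
      Nat.card_Ico, nsmul_eq_mul, Nat.cast_sub h₁]
    push_cast
    linarith
  · exact (hs i h₁ h₂).ge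

theorem two_le_steering_const (h M : ℝ) :
    2 ≤ 2 * √(1 + h ^ 2) * √(9 / 4 + 4 / (h ^ 2 * M ^ 2)) := by
  have h₁ : 1 ≤ √(1 + h ^ 2) := one_le_sqrt.mpr (by nlinarith)
  have h₂ : 1 ≤ √(9 / 4 + 4 / (h ^ 2 * M ^ 2)) :=
    one_le_sqrt.mpr (by linarith [(by positivity : (0 : ℝ) ≤ 4 / (h ^ 2 * M ^ 2))])
  nlinarith

theorem steering_gain_le {h M n : ℝ} (hh : 0 < h) (hM : 1 ≤ M) (hn : 7 * M ≤ n) :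
    18 + 11 * h + 9 / h ≤ n * (2 * √(1 + h ^ 2) * √(9 / 4 + 4 / (h ^ 2 * M ^ 2))) := by
  have hsq : ((18 + 11 * h + 9 / h) / 14) ^ 2 ≤ (1 + h ^ 2) * (9 / 4 + 4 / h ^ 2) := by
    rw [div_pow, div_le_iff₀ (by norm_num), ← sub_nonneg]
    have : (1 + h ^ 2) * (9 / 4 + 4 / h ^ 2) * 14 ^ 2 - (18 + 11 * h + 9 / h) ^ 2 =
        (320 * h ^ 4 - 396 * h ^ 3 + 703 * h ^ 2 - 324 * h + 703) / h ^ 2 := by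
      field_simp; ring
    rw [this]
    apply div_nonneg _ (sq_nonneg h)
    nlinarith [sq_nonneg (h ^ 2 - h), sq_nonneg (h - 1), sq_nonneg h]
  have hM' : √(9 / 4 + 4 / h ^ 2) ≤ M * √(9 / 4 + 4 / (h ^ 2 * M ^ 2)) := by
    have hM₀ : 0 < M := by linarith
    calc √(9 / 4 + 4 / h ^ 2) ≤ √(M ^ 2 * (9 / 4 + 4 / (h ^ 2 * M ^ 2))) := by
          rw [show M ^ 2 * (9 / 4 + 4 / (h ^ 2 * M ^ 2)) = 9 / 4 * M ^ 2 + 4 / h ^ 2 by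
            field_simp]
          gcongr
          nlinarith
      _ = M * √(9 / 4 + 4 / (h ^ 2 * M ^ 2)) := by rw [sqrt_mul (sq_nonneg M), sqrt_sq hM₀.le]
  calc 18 + 11 * h + 9 / h ≤ 14 * (√(1 + h ^ 2) * √(9 / 4 + 4 / h ^ 2)) := by
        rw [← sqrt_mul (by positivity)]
        linarith [le_sqrt_of_sq_le hsq]
    _ ≤ 14 * (√(1 + h ^ 2) * (M * √(9 / 4 + 4 / (h ^ 2 * M ^ 2)))) := by gcongr
    _ = 7 * M * (2 * √(1 + h ^ 2) * √(9 / 4 + 4 / (h ^ 2 * M ^ 2))) := by ring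
    _ ≤ n * (2 * √(1 + h ^ 2) * √(9 / 4 + 4 / (h ^ 2 * M ^ 2))) := by gcongr

theorem steering_gain_le_of_eq {h c : ℝ} {N : ℕ} (hh : 0 < h) (hN : 8 ≤ N)
    (hc : c = 2 * √(1 + h ^ 2) * √(9 / 4 + 4 / (h ^ 2 * max 1 (((N : ℝ) - 8) / 7) ^ 2))) :
    18 + 11 * h + 9 / h ≤ (N - 1) * c := by
  have hN' : (8 : ℝ) ≤ N := by exact_mod_cast hN
  have hM : 7 * max 1 (((N : ℝ) - 8) / 7) ≤ N - 1 := by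
    rw [mul_max_of_nonneg _ _ (by norm_num)]
    exact max_le (by linarith) (by linarith)
  exact hc ▸ steering_gain_le hh (le_max_left _ _) hM

theorem UnicycleSol.of_kinematics {m J k κ h : ℝ} (hm : m ≠ 0) (hJ : J ≠ 0) (hh : h ≠ 0)
    {x : ℕ → EuclideanSpace ℝ (Fin 5)}
    (hx : ∀ t, x (t + 1) 0 = x t 0 + h * x t 3 * cos (x t 2) ∧
      x (t + 1) 1 = x t 1 + h * x t 3 * sin (x t 2) ∧ x (t + 1) 2 = x t 2 + h * x t 4) :
    UnicycleSol m J k κ h (fun t ↦ (m * (x (t + 1) 3 - x t 3) / h + k * x t 3,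
      J * (x (t + 1) 4 - x t 4) / h + κ * x t 4)) x := by
  intro t
  obtain ⟨h₀, h₁, h₂⟩ := hx t
  refine ⟨h₀, h₁, h₂, ?_, ?_⟩ <;> field_simp <;> ring

/-- `(a, b)` is the position after the first step; `d₁`, `d₂` solve
`d₁ (cos ψ, sin ψ) + d₂ (cos ψ, -sin ψ) = -(a, b)`, so the state is `0` from time `4` on. -/
noncomputable def steer (h ψ : ℝ) (x₀ : EuclideanSpace ℝ (Fin 5)) (t : ℕ) :
    EuclideanSpace ℝ (Fin 5) :=
  let a := x₀ 0 + h * x₀ 3 * cos (x₀ 2)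
  let b := x₀ 1 + h * x₀ 3 * sin (x₀ 2)
  let θ := x₀ 2 + h * x₀ 4
  let d₁ := -(a / cos ψ + b / sin ψ) / 2
  let d₂ := -(a / cos ψ - b / sin ψ) / 2
  match t with
  | 0 => x₀
  | 1 => !₂[a, b, θ, 0, (ψ - θ) / h]
  | 2 => !₂[a, b, ψ, d₁ / h, -2 * ψ / h]
  | 3 => !₂[a + d₁ * cos ψ, b + d₁ * sin ψ, -ψ, d₂ / h, ψ / h]
  | _ => 0

theorem steer_of_four_le {h ψ : ℝ} {x₀ : EuclideanSpace ℝ (Fin 5)} {t : ℕ} (ht : 4 ≤ t) :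
    steer h ψ x₀ t = 0 := by
  obtain ⟨n, rfl⟩ := Nat.exists_eq_add_of_le' ht
  rfl

theorem steer_kinematics {h ψ : ℝ} (hh : h ≠ 0) (hc : cos ψ ≠ 0) (hs : sin ψ ≠ 0)
    (x₀ : EuclideanSpace ℝ (Fin 5)) (t : ℕ) :
    steer h ψ x₀ (t + 1) 0 =
        steer h ψ x₀ t 0 + h * steer h ψ x₀ t 3 * cos (steer h ψ x₀ t 2) ∧
      steer h ψ x₀ (t + 1) 1 =
        steer h ψ x₀ t 1 + h * steer h ψ x₀ t 3 * sin (steer h ψ x₀ t 2) ∧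
      steer h ψ x₀ (t + 1) 2 = steer h ψ x₀ t 2 + h * steer h ψ x₀ t 4 := by
  match t with
  | 0 => simp [steer]
  | 1 | 2 | 3 =>
    simp only [steer, Matrix.cons_val_zero, Matrix.cons_val_one, Matrix.cons_val,
      PiLp.zero_apply, cos_neg, sin_neg]
    refine ⟨?_, ?_, ?_⟩ <;> field_simp <;> ring
  | n + 4 => simp [steer_of_four_le]

section SteerNorm

variable {h ψ r : ℝ}

theorem mul_norm_steer_one_le (hh : 0 < h) (hψ₀ : 0 < ψ) (hψ₁ : ψ ≤ 1) (hψ : ψ ^ 2 ≤ r)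
    (a b θ : ℝ) : ψ * ‖!₂[a, b, θ, 0, (ψ - θ) / h]‖ ≤ |a| + |b| + |θ| + (r + |θ|) / h := by
  have hv := mul_le_mul_of_nonneg_left (norm_vec5_le_sum_abs a b θ 0 ((ψ - θ) / h)) hψ₀.le
  have hω : ψ * |(ψ - θ) / h| ≤ (r + |θ|) / h := mul_abs_div_le hh (by
    nlinarith [abs_sub ψ θ, abs_of_pos hψ₀, mul_le_of_le_one_left (abs_nonneg θ) hψ₁])
  simp only [abs_zero] at hv
  linarith [mul_le_of_le_one_left (abs_nonneg a) hψ₁, mul_le_of_le_one_left (abs_nonneg b) hψ₁,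
    mul_le_of_le_one_left (abs_nonneg θ) hψ₁]

theorem mul_norm_steer_two_le (hh : 0 < h) (hψ₀ : 0 < ψ) (hψ₁ : ψ ≤ 1) (hψ : ψ ^ 2 ≤ r)
    (a b : ℝ) {d D : ℝ} (hd : ψ * |d| ≤ D) :
    ψ * ‖!₂[a, b, ψ, d / h, -2 * ψ / h]‖ ≤ |a| + |b| + r + (D + 2 * r) / h := by
  have hv := mul_le_mul_of_nonneg_left (norm_vec5_le_sum_abs a b ψ (d / h) (-2 * ψ / h)) hψ₀.le
  have hψψ : ψ * |ψ| ≤ r := by rwa [abs_of_pos hψ₀, ← sq]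
  have hω : ψ * |-2 * ψ / h| ≤ 2 * r / h :=
    mul_abs_div_le hh (by rw [abs_mul]; norm_num; linarith)
  rw [add_div _ (2 * r)]
  linarith [mul_le_of_le_one_left (abs_nonneg a) hψ₁, mul_le_of_le_one_left (abs_nonneg b) hψ₁,
    mul_abs_div_le hh hd]

theorem mul_norm_steer_three_le (hh : 0 < h) (hψ₀ : 0 < ψ) (hψ₁ : ψ ≤ 1) (hψ : ψ ^ 2 ≤ r)
    (a b : ℝ) {d₁ d₂ D : ℝ} (hd₁ : ψ * |d₁| ≤ D) (hd₂ : ψ * |d₂| ≤ D) :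
    ψ * ‖!₂[a + d₁ * cos ψ, b + d₁ * sin ψ, -ψ, d₂ / h, ψ / h]‖ ≤
      |a| + |b| + 2 * D + r + (D + r) / h := by
  have hv := mul_le_mul_of_nonneg_left
    (norm_vec5_le_sum_abs (a + d₁ * cos ψ) (b + d₁ * sin ψ) (-ψ) (d₂ / h) (ψ / h)) hψ₀.le
  have hψψ : ψ * |ψ| ≤ r := by rwa [abs_of_pos hψ₀, ← sq]
  have hdrive : ∀ {y c : ℝ}, |c| ≤ 1 → |y + d₁ * c| ≤ |y| + |d₁| := fun hc ↦
    (abs_add_le _ _).trans (by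
      rw [abs_mul]; gcongr; exact mul_le_of_le_one_right (abs_nonneg _) hc)
  have c₁ := mul_le_mul_of_nonneg_left (hdrive (y := a) (abs_cos_le_one ψ)) hψ₀.le
  have c₂ := mul_le_mul_of_nonneg_left (hdrive (y := b) (abs_sin_le_one ψ)) hψ₀.le
  rw [abs_neg] at hv
  rw [add_div _ r]
  linarith [mul_le_of_le_one_left (abs_nonneg a) hψ₁, mul_le_of_le_one_left (abs_nonneg b) hψ₁,
    mul_abs_div_le hh hd₂, mul_abs_div_le hh hψψ]

theorem steer_norm_sum_le (hh : 0 < h) (hψ₀ : 0 < ψ) (hψ₁ : ψ ≤ 1)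
    {x₀ : EuclideanSpace ℝ (Fin 5)} (hψ : ψ ^ 2 ≤ ‖x₀‖) :
    ψ * (‖steer h ψ x₀ 1‖ + ‖steer h ψ x₀ 2‖ + ‖steer h ψ x₀ 3‖) ≤
      (18 + 11 * h + 9 / h) * ‖x₀‖ := by
  simp only [steer]
  set r := ‖x₀‖
  have hx : ∀ i, |x₀ i| ≤ r := fun i ↦ by simpa using PiLp.norm_apply_le x₀ i
  set a := x₀ 0 + h * x₀ 3 * cos (x₀ 2)
  set b := x₀ 1 + h * x₀ 3 * sin (x₀ 2)
  set θ := x₀ 2 + h * x₀ 4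
  have ha : |a| ≤ (1 + h) * r := abs_add_mul_mul_le (hx 0) (hx 3) (abs_cos_le_one _) hh.le
  have hb : |b| ≤ (1 + h) * r := abs_add_mul_mul_le (hx 1) (hx 3) (abs_sin_le_one _) hh.le
  have hθ : |θ| ≤ (1 + h) * r := by
    simpa using abs_add_mul_mul_le (hx 2) (hx 4) (c := 1) (by simp) hh.le
  have hd := mul_abs_div_cos_add_abs_div_sin_le hψ₀ hψ₁ a b
  have hd₁ : ψ * |-(a / cos ψ + b / sin ψ) / 2| ≤ |a| + |b| := by
    rw [abs_div, abs_neg, abs_two]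
    nlinarith [abs_add_le (a / cos ψ) (b / sin ψ)]
  have hd₂ : ψ * |-(a / cos ψ - b / sin ψ) / 2| ≤ |a| + |b| := by
    rw [abs_div, abs_neg, abs_two]
    nlinarith [abs_sub (a / cos ψ) (b / sin ψ)]
  calc _ ≤ (5 * (|a| + |b|) + |θ| + 2 * r) + (2 * (|a| + |b|) + |θ| + 4 * r) / h := by
        rw [mul_add, mul_add]
        refine (add_le_add (add_le_add (mul_norm_steer_one_le hh hψ₀ hψ₁ hψ a b θ)
          (mul_norm_steer_two_le hh hψ₀ hψ₁ hψ a b hd₁))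
          (mul_norm_steer_three_le hh hψ₀ hψ₁ hψ a b hd₁ hd₂)).trans_eq ?_
        ring
    _ ≤ (13 + 11 * h) * r + (9 + 5 * h) * r / h := by gcongr <;> linarith
    _ = (18 + 11 * h + 9 / h) * r := by field_simp; ring

end SteerNorm

theorem exists_unicycleSol_sum_mul_norm_le {m J k κ h : ℝ} (hm : m ≠ 0) (hJ : J ≠ 0)
    (hh : 0 < h) {N : ℕ} (hN : 3 ≤ N) (x₀ : EuclideanSpace ℝ (Fin 5)) {w : ℕ → ℝ} {β : ℝ}
    (hβ : 0 ≤ β) (hw : ∀ t ∈ Icc 1 3, w t = β * sqrtWeight ‖x₀‖) :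
    ∃ (u : ℕ → ℝ × ℝ) (xs : ℕ → EuclideanSpace ℝ (Fin 5)), xs 0 = x₀ ∧
      UnicycleSol m J k κ h u xs ∧
      ∑ t ∈ Icc 1 N, w t * ‖xs t‖ ≤ β * (18 + 11 * h + 9 / h) * ‖x₀‖ := by
  obtain rfl | hx₀ := eq_or_ne x₀ 0
  · exact ⟨_, fun _ ↦ 0, rfl, UnicycleSol.of_kinematics hm hJ hh.ne' fun _ ↦ by simp, by simp⟩
  set ψ := sqrtWeight ‖x₀‖
  have hψ₀ := sqrtWeight_pos ‖x₀‖
  have hψ₁ := sqrtWeight_le_one ‖x₀‖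
  have hcos : cos ψ ≠ 0 := (cos_pos_of_le_one (abs_le.mpr ⟨by linarith, hψ₁⟩)).ne'
  have hsin : sin ψ ≠ 0 := (sin_pos_of_pos_of_le_one hψ₀ hψ₁).ne'
  refine ⟨_, steer h ψ x₀, rfl,
    UnicycleSol.of_kinematics hm hJ hh.ne' (steer_kinematics hh.ne' hcos hsin x₀), ?_⟩
  have hsub : ∑ t ∈ Icc 1 N, w t * ‖steer h ψ x₀ t‖ =
      ∑ t ∈ Icc 1 3, w t * ‖steer h ψ x₀ t‖ := by
    refine (sum_subset (Icc_subset_Icc_right hN) fun t ht ht' ↦ ?_).symm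
    rw [steer_of_four_le (by simp only [mem_Icc] at ht ht'; omega), norm_zero, mul_zero]
  have hsum : ∑ t ∈ Icc 1 3, ψ * ‖steer h ψ x₀ t‖ =
      ψ * (‖steer h ψ x₀ 1‖ + ‖steer h ψ x₀ 2‖ + ‖steer h ψ x₀ 3‖) := by
    simp only [sum_Icc_succ_top (by norm_num : 1 ≤ 3), sum_Icc_succ_top (by norm_num : 1 ≤ 2),
      Icc_self, sum_singleton]
    ring
  calc ∑ t ∈ Icc 1 N, w t * ‖steer h ψ x₀ t‖
      = β * (ψ * (‖steer h ψ x₀ 1‖ + ‖steer h ψ x₀ 2‖ + ‖steer h ψ x₀ 3‖)) := by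
        rw [hsub, sum_congr rfl fun t ht ↦ by rw [hw t ht, mul_assoc], ← mul_sum, hsum]
    _ ≤ β * ((18 + 11 * h + 9 / h) * ‖x₀‖) := mul_le_mul_of_nonneg_left
        (steer_norm_sum_le hh hψ₀ hψ₁ (sqrtWeight_sq_le (norm_pos_iff.mpr hx₀))) hβ
    _ = β * (18 + 11 * h + 9 / h) * ‖x₀‖ := by ring

/-- the Euclidean norm is an EGDCLF of order `N` for the unicycle
model with the Condition-2 weights; properties (P1)–(P4) hold with
`χ₁ = χ₂ = id`, `φ(r) = (N−1)·c·max{r^(1/2), r}`, `λ̃ = e^(α/2)`, `μ̃ = 1/2`. -/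
theorem norm_is_EGDCLF_for_unicycle
    (m J k κ h : ℝ) (hm : 0 < m) (hJ : 0 < J) (hh : 0 < h)
    (N : ℕ) (hN : 8 ≤ N) (α : ℝ) (hα : α ∈ Set.Ioo (0 : ℝ) 1)
    (c : ℝ)
    (hc : c = 2 * Real.sqrt (1 + h ^ 2) *
      Real.sqrt (9/4 + 4 / (h ^ 2 * max 1 (((N : ℝ) - 8) / 7) ^ 2)))
    (σ : ℕ → EuclideanSpace ℝ (Fin 5) → ℝ)
    (hσi : ∀ i : ℕ, 1 ≤ i → i < N → ∀ x : EuclideanSpace ℝ (Fin 5),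
      σ i x = (1 - α) / (((N : ℝ) - 1) * c) *
        (if 0 < ‖x‖ ∧ ‖x‖ < 1 then ‖x‖ ^ (1/2 : ℝ) else 1))
    (hσN : ∀ x : EuclideanSpace ℝ (Fin 5),
      σ N x = 1 - ∑ i ∈ Finset.Ico 1 N, σ i x)
    (φ : ℝ → ℝ) (hφ : ∀ r : ℝ, φ r = ((N : ℝ) - 1) * c * max (r ^ (1/2 : ℝ)) r) :
    -- positivity of the weights
    (∀ x : EuclideanSpace ℝ (Fin 5), ∀ i ∈ Finset.Icc 1 N, 0 < σ i x) ∧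
    -- (P1) with χ₁(r) = r and χ₂(r) = r
    (∀ x : EuclideanSpace ℝ (Fin 5), ‖x‖ ≤ ‖x‖ ∧ ‖x‖ ≤ ‖x‖) ∧
    -- (P2): average descent achievable, with weights summing to (at least) 1
    (∀ x₀ : EuclideanSpace ℝ (Fin 5),
      ∃ (u : ℕ → ℝ × ℝ) (xs : ℕ → EuclideanSpace ℝ (Fin 5)),
        xs 0 = x₀ ∧ UnicycleSol m J k κ h u xs ∧
        (∑ t ∈ Finset.Icc 1 N, σ t x₀ * ‖xs t‖ ≤ (1 - α) * ‖x₀‖) ∧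
        1 ≤ ∑ i ∈ Finset.Icc 1 N, σ i x₀) ∧
    -- (P3)
    (∀ x : EuclideanSpace ℝ (Fin 5), (1 - α) * ‖x‖ ≤
      φ ‖x‖ * (Finset.Icc 1 N).inf'
        (Finset.nonempty_Icc.mpr (by omega)) (fun i => σ i x)) ∧
    -- (P4) with λ̃ = e^(α/2) and μ̃ = 1/2 (here χ₁⁻¹ = id)
    (∀ r ≥ (0 : ℝ), ∀ τ : ℝ, -α ≤ τ →
      φ (r * Real.exp (-τ)) ≤ φ r * Real.exp (α / 2) * Real.exp (-(1/2 : ℝ) * τ)) := by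
  obtain ⟨hα₀, hα₁⟩ := hα
  have hN₁ : (0 : ℝ) < N - 1 := sub_pos.mpr (by exact_mod_cast (by omega : 1 < N))
  have hgain := steering_gain_le_of_eq hh hN hc
  have hc₂ : 2 ≤ c := hc ▸ two_le_steering_const _ _
  have hNc : 0 < (N - 1) * c := by nlinarith
  set β := (1 - α) / ((N - 1) * c) with hβ
  have hβ₀ : 0 < β := div_pos (by linarith) hNc
  have hσ : ∀ x, ∀ i ∈ Icc 1 N, β * sqrtWeight ‖x‖ ≤ σ i x := fun x ↦
    le_of_mem_Icc_of_eq_one_sub (fun i h₁ h₂ ↦ hσi i h₁ h₂ x) (hσN x)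
      (natCast_mul_div_mul_sqrtWeight_le_one (by omega) (by linarith) hc₂ _)
  refine ⟨fun x i hi ↦ (mul_pos hβ₀ (sqrtWeight_pos _)).trans_le (hσ x i hi),
    fun _ ↦ ⟨le_rfl, le_rfl⟩, fun x₀ ↦ ?_, fun x ↦ ?_, fun r hr τ hτ ↦ ?_⟩
  · obtain ⟨u, xs, h₀, hsol, hsum⟩ := exists_unicycleSol_sum_mul_norm_le (k := k) (κ := κ)
      (N := N) hm.ne' hJ.ne' hh (by omega) x₀ hβ₀.le
      fun t ht ↦ hσi t (mem_Icc.mp ht).1 (by have := (mem_Icc.mp ht).2; omega) x₀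
    refine ⟨u, xs, h₀, hsol, hsum.trans ?_, (sum_Icc_eq_one_of_eq_one_sub (by omega) (hσN x₀)).ge⟩
    gcongr
    rw [hβ, div_mul_eq_mul_div, div_le_iff₀ hNc]
    nlinarith
  · have hφ₀ : 0 ≤ φ ‖x‖ := hφ _ ▸ mul_nonneg hNc.le (le_max_of_le_right (norm_nonneg x))
    calc (1 - α) * ‖x‖ ≤ (1 - α) * (sqrtWeight ‖x‖ * max (‖x‖ ^ (1 / 2 : ℝ)) ‖x‖) := by
          gcongr; exact le_sqrtWeight_mul_max (norm_nonneg x)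
      _ = φ ‖x‖ * (β * sqrtWeight ‖x‖) := by rw [hφ, hβ]; field_simp [hN₁.ne']
      _ ≤ _ := mul_le_mul_of_nonneg_left (le_inf' _ _ (hσ x)) hφ₀
  · simpa only [hφ, mul_assoc] using
      mul_le_mul_of_nonneg_left (max_rpow_half_mul_exp_le hr hα₀.le hτ) hNc.le
end
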